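/- arXiv:1908.04487 — 2 statements merged into one kernel-verified Lean document; each statement's English description precedes it below -/
import Mathlib

section
/- Let f_b be nonnegative boundary data with finite mass and entropy, and for each k ∈ ℕ* let F^k be a nonnegative L¹([0,1]²)⁴ solution of the truncated Broadwell system at level k. Then there is a constant c_b, depending only on f_b, such that for all k ∈ ℕ* and each i ∈ {1,2,3,4}, ∫_{[0,1]²} F^k_i(x,y) dx dy ≤ c_b. -/
open MeasureTheory Real Set Filter
open scoped Classical Topology ENNReal

noncomputable section

/-- The closed unit square `[0,1] × [0,1]`. -/
def UnitSq : Set (ℝ × ℝ) := Icc (0:ℝ) 1 ×ˢ Icc (0:ℝ) 1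

/-- The truncation `a ↦ a / (1 + a/k)`. -/
def truncK (k a : ℝ) : ℝ := a / (1 + a / k)

/-- Nonnegative measurable boundary data on `[0,1]` with finite mass. -/
def IsBoundaryData (fb : Fin 4 → ℝ → ℝ) : Prop :=
  ∀ i, Measurable (fb i) ∧ (∀ u ∈ Icc (0:ℝ) 1, 0 ≤ fb i u) ∧
    IntegrableOn (fb i) (Icc (0:ℝ) 1)

/-- Finite entropy of the boundary data. -/
def FiniteEntropy (fb : Fin 4 → ℝ → ℝ) : Prop :=
  ∀ i, IntegrableOn (fun u => fb i u * Real.log (1 + fb i u)) (Icc (0:ℝ) 1)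

/-- The truncated collision term `Q^k`; indices `0,1,2,3` stand for `F₁,F₂,F₃,F₄`. -/
def Qk (k : ℝ) (F : Fin 4 → ℝ → ℝ → ℝ) (x y : ℝ) : ℝ :=
  truncK k (F 2 x y) * truncK k (F 3 x y) - truncK k (F 0 x y) * truncK k (F 1 x y)

/-- Nonnegative `L¹` mild solution of the truncated Broadwell system at level `k`. -/
def MildTrunc (k : ℝ) (fb : Fin 4 → ℝ → ℝ) (F : Fin 4 → ℝ → ℝ → ℝ) : Prop :=
  (∀ i, Measurable (Function.uncurry (F i))) ∧
  (∀ i, ∀ᵐ p : ℝ × ℝ ∂(volume.restrict UnitSq), 0 ≤ F i p.1 p.2) ∧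
  (∀ i, IntegrableOn (fun p : ℝ × ℝ => F i p.1 p.2) UnitSq) ∧
  (∀ᵐ p : ℝ × ℝ ∂(volume.restrict UnitSq),
    F 0 p.1 p.2 = min (fb 0 p.2) (k / 2) + ∫ X in (0:ℝ)..p.1, Qk k F X p.2) ∧
  (∀ᵐ p : ℝ × ℝ ∂(volume.restrict UnitSq),
    F 1 p.1 p.2 = min (fb 1 p.2) (k / 2) + ∫ X in p.1..(1:ℝ), Qk k F X p.2) ∧
  (∀ᵐ p : ℝ × ℝ ∂(volume.restrict UnitSq),
    F 2 p.1 p.2 = min (fb 2 p.1) (k / 2) - ∫ Y in (0:ℝ)..p.2, Qk k F p.1 Y) ∧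
  (∀ᵐ p : ℝ × ℝ ∂(volume.restrict UnitSq),
    F 3 p.1 p.2 = min (fb 3 p.1) (k / 2) - ∫ Y in p.2..(1:ℝ), Qk k F p.1 Y)

/-- Outgoing trace of `F₁` at `x = 1`, read off from the mild form. -/
def trace1 (k : ℝ) (fb : Fin 4 → ℝ → ℝ) (F : Fin 4 → ℝ → ℝ → ℝ) (y : ℝ) : ℝ :=
  min (fb 0 y) (k / 2) + ∫ X in (0:ℝ)..(1:ℝ), Qk k F X y

/-- Outgoing trace of `F₂` at `x = 0`, read off from the mild form. -/
def trace2 (k : ℝ) (fb : Fin 4 → ℝ → ℝ) (F : Fin 4 → ℝ → ℝ → ℝ) (y : ℝ) : ℝ :=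
  min (fb 1 y) (k / 2) + ∫ X in (0:ℝ)..(1:ℝ), Qk k F X y

/-- Outgoing trace of `F₃` at `y = 1`, read off from the mild form. -/
def trace3 (k : ℝ) (fb : Fin 4 → ℝ → ℝ) (F : Fin 4 → ℝ → ℝ → ℝ) (x : ℝ) : ℝ :=
  min (fb 2 x) (k / 2) - ∫ Y in (0:ℝ)..(1:ℝ), Qk k F x Y

/-- Outgoing trace of `F₄` at `y = 0`, read off from the mild form. -/
def trace4 (k : ℝ) (fb : Fin 4 → ℝ → ℝ) (F : Fin 4 → ℝ → ℝ → ℝ) (x : ℝ) : ℝ :=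
  min (fb 3 x) (k / 2) - ∫ Y in (0:ℝ)..(1:ℝ), Qk k F x Y

/-- A smooth nonnegative mollifier with integral one, supported in the closed ball of radius `α`. -/
def IsMollifier (α : ℝ) (μ : ℝ × ℝ → ℝ) : Prop :=
  ContDiff ℝ (⊤ : ℕ∞) μ ∧ (∀ w, 0 ≤ μ w) ∧
    Function.support μ ⊆ Metric.closedBall 0 α ∧ (∫ w : ℝ × ℝ, μ w) = 1

/-- Extension of a function on `[0,1]²` by zero to all of `ℝ²`. -/
def extSq (f : ℝ → ℝ → ℝ) : ℝ × ℝ → ℝ := fun p => if p ∈ UnitSq then f p.1 p.2 else 0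

/-- Convolution with a mollifier, after extension by zero outside `[0,1]²`. -/
def molConv (f : ℝ → ℝ → ℝ) (μ : ℝ × ℝ → ℝ) (x y : ℝ) : ℝ :=
  ∫ w : ℝ × ℝ, extSq f ((x, y) - w) * μ w

/-- Right-hand side of the damped mollified equation for `F₁`. -/
def rhs1 (k : ℝ) (μ : ℝ × ℝ → ℝ) (f F : Fin 4 → ℝ → ℝ → ℝ) (x y : ℝ) : ℝ :=
  truncK k (F 2 x y) * truncK k (molConv (f 3) μ x y)
    - truncK k (F 0 x y) * truncK k (molConv (f 1) μ x y)

/-- Right-hand side of the damped mollified equation for `F₂`. -/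
def rhs2 (k : ℝ) (μ : ℝ × ℝ → ℝ) (f F : Fin 4 → ℝ → ℝ → ℝ) (x y : ℝ) : ℝ :=
  truncK k (molConv (f 2) μ x y) * truncK k (F 3 x y)
    - truncK k (molConv (f 0) μ x y) * truncK k (F 1 x y)

/-- Right-hand side of the damped mollified equation for `F₃`. -/
def rhs3 (k : ℝ) (μ : ℝ × ℝ → ℝ) (f F : Fin 4 → ℝ → ℝ → ℝ) (x y : ℝ) : ℝ :=
  truncK k (F 0 x y) * truncK k (molConv (f 1) μ x y)
    - truncK k (F 2 x y) * truncK k (molConv (f 3) μ x y)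

/-- Right-hand side of the damped mollified equation for `F₄`. -/
def rhs4 (k : ℝ) (μ : ℝ × ℝ → ℝ) (f F : Fin 4 → ℝ → ℝ → ℝ) (x y : ℝ) : ℝ :=
  truncK k (molConv (f 0) μ x y) * truncK k (F 1 x y)
    - truncK k (molConv (f 2) μ x y) * truncK k (F 3 x y)

/-- The constant `c_α = α⁻¹ ∫₀¹ Σᵢ f_{bi}`. -/
def cAlpha (α : ℝ) (fb : Fin 4 → ℝ → ℝ) : ℝ :=
  (1 / α) * ∫ u in Icc (0:ℝ) 1, ∑ i, fb i u

/-- Membership in the convex set `K_α`. -/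
def MemK (α : ℝ) (fb : Fin 4 → ℝ → ℝ) (f : Fin 4 → ℝ → ℝ → ℝ) : Prop :=
  (∀ i, Measurable (Function.uncurry (f i))) ∧
  (∀ i, ∀ᵐ p : ℝ × ℝ ∂(volume.restrict UnitSq), 0 ≤ f i p.1 p.2) ∧
  (∀ i, IntegrableOn (fun p : ℝ × ℝ => f i p.1 p.2) UnitSq) ∧
  (∑ i, ∫ p in UnitSq, f i p.1 p.2) ≤ cAlpha α fb

/-- Nonnegative `L¹` mild solution of the damped mollified system with data `f`. -/
def DampedMild (k α : ℝ) (fb : Fin 4 → ℝ → ℝ) (μ : ℝ × ℝ → ℝ)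
    (f F : Fin 4 → ℝ → ℝ → ℝ) : Prop :=
  (∀ i, Measurable (Function.uncurry (F i))) ∧
  (∀ i, ∀ᵐ p : ℝ × ℝ ∂(volume.restrict UnitSq), 0 ≤ F i p.1 p.2) ∧
  (∀ i, IntegrableOn (fun p : ℝ × ℝ => F i p.1 p.2) UnitSq) ∧
  (∀ᵐ p : ℝ × ℝ ∂(volume.restrict UnitSq),
    F 0 p.1 p.2 = min (fb 0 p.2) (k / 2)
      + ∫ X in (0:ℝ)..p.1, (rhs1 k μ f F X p.2 - α * F 0 X p.2)) ∧
  (∀ᵐ p : ℝ × ℝ ∂(volume.restrict UnitSq),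
    F 1 p.1 p.2 = min (fb 1 p.2) (k / 2)
      + ∫ X in p.1..(1:ℝ), (rhs2 k μ f F X p.2 - α * F 1 X p.2)) ∧
  (∀ᵐ p : ℝ × ℝ ∂(volume.restrict UnitSq),
    F 2 p.1 p.2 = min (fb 2 p.1) (k / 2)
      + ∫ Y in (0:ℝ)..p.2, (rhs3 k μ f F p.1 Y - α * F 2 p.1 Y)) ∧
  (∀ᵐ p : ℝ × ℝ ∂(volume.restrict UnitSq),
    F 3 p.1 p.2 = min (fb 3 p.1) (k / 2)
      + ∫ Y in p.2..(1:ℝ), (rhs4 k μ f F p.1 Y - α * F 3 p.1 Y))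

/-- The entropy-dissipation integrand `(a - b) log (a/b)`, interpreted as a nonnegative
extended-real number (it is `∞` when exactly one of `a`, `b` vanishes, `0` when both do). -/
def entDiss (a b : ℝ) : ℝ≥0∞ :=
  if a = 0 ∧ b = 0 then 0
  else if a = 0 ∨ b = 0 then ⊤
  else ENNReal.ofReal ((a - b) * Real.log (a / b))

/-- Relative compactness (sequential form) of a sequence of functions in `L¹(μ)`. -/
def RelCompL1 {X : Type*} [MeasurableSpace X] (μ : Measure X) (f : ℕ → X → ℝ) : Prop :=
  ∀ φ : ℕ → ℕ, StrictMono φ → ∃ ψ : ℕ → ℕ, StrictMono ψ ∧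
    ∃ g : X → ℝ, Integrable g μ ∧
      Tendsto (fun n => ∫ x, |f (φ (ψ n)) x - g x| ∂μ) atTop (𝓝 0)

-- AUX
lemma truncK_nonneg' {k a : ℝ} (hk : 0 < k) (ha : 0 ≤ a) : 0 ≤ truncK k a :=
  div_nonneg ha (by positivity)

lemma truncK_le_self' {k a : ℝ} (hk : 0 < k) (ha : 0 ≤ a) : truncK k a ≤ a :=
  div_le_self ha (le_add_of_nonneg_right (div_nonneg ha hk.le))

lemma truncK_le_k' {k a : ℝ} (hk : 0 < k) (ha : 0 ≤ a) : truncK k a ≤ k := by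
  rw [truncK, div_le_iff₀ (by positivity)]
  have h : k * (1 + a / k) = k + a := by field_simp
  linarith

def sqMu : Measure ℝ := volume.restrict (Icc (0:ℝ) 1)

instance : IsProbabilityMeasure sqMu := ⟨by simp [sqMu, Real.volume_Icc]⟩

lemma sqMu_map_snd : (sqMu.prod sqMu).map Prod.snd = sqMu := by
  rw [Measure.map_snd_prod, measure_univ, one_smul]

lemma sqMu_map_fst : (sqMu.prod sqMu).map Prod.fst = sqMu := by
  rw [Measure.map_fst_prod, measure_univ, one_smul]

lemma integrable_comp_snd {g : ℝ → ℝ} (hg : Integrable g sqMu) :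
    Integrable (fun p : ℝ × ℝ => g p.2) (sqMu.prod sqMu) := by
  have hm : AEStronglyMeasurable g ((sqMu.prod sqMu).map Prod.snd) := by
    rw [sqMu_map_snd]; exact hg.aestronglyMeasurable
  exact (integrable_map_measure hm measurable_snd.aemeasurable).mp (by rwa [sqMu_map_snd])

lemma integral_comp_snd {g : ℝ → ℝ} (hg : Integrable g sqMu) :
    ∫ p, g p.2 ∂(sqMu.prod sqMu) = ∫ y, g y ∂sqMu := by
  have hm : AEStronglyMeasurable g ((sqMu.prod sqMu).map Prod.snd) := by
    rw [sqMu_map_snd]; exact hg.aestronglyMeasurable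
  conv_rhs => rw [← sqMu_map_snd]
  exact (integral_map measurable_snd.aemeasurable hm).symm

lemma integrable_comp_fst {g : ℝ → ℝ} (hg : Integrable g sqMu) :
    Integrable (fun p : ℝ × ℝ => g p.1) (sqMu.prod sqMu) := by
  have hm : AEStronglyMeasurable g ((sqMu.prod sqMu).map Prod.fst) := by
    rw [sqMu_map_fst]; exact hg.aestronglyMeasurable
  exact (integrable_map_measure hm measurable_fst.aemeasurable).mp (by rwa [sqMu_map_fst])

lemma integral_comp_fst {g : ℝ → ℝ} (hg : Integrable g sqMu) :
    ∫ p, g p.1 ∂(sqMu.prod sqMu) = ∫ y, g y ∂sqMu := by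
  have hm : AEStronglyMeasurable g ((sqMu.prod sqMu).map Prod.fst) := by
    rw [sqMu_map_fst]; exact hg.aestronglyMeasurable
  conv_rhs => rw [← sqMu_map_fst]
  exact (integral_map measurable_fst.aemeasurable hm).symm

lemma restrict_UnitSq_eq : volume.restrict UnitSq = sqMu.prod sqMu := by
  simp only [sqMu]
  rw [Measure.prod_restrict, ← Measure.volume_eq_prod]
  rfl

/-- Lemma 3.1, mass bound: uniform-in-`k` bound on the total mass of
solutions of the truncated Broadwell systems. -/
theorem truncated_mass_bound (fb : Fin 4 → ℝ → ℝ)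
    (hfb : IsBoundaryData fb) (hent : FiniteEntropy fb) :
    ∃ c : ℝ, ∀ k : ℕ, 1 ≤ k → ∀ F : Fin 4 → ℝ → ℝ → ℝ, MildTrunc (k : ℝ) fb F →
      ∀ i, (∫ p in UnitSq, F i p.1 p.2) ≤ c := by
  refine ⟨∑ i, ∫ u in Icc (0:ℝ) 1, fb i u, ?_⟩
  intro k hk F hF i
  have hk0 : (0:ℝ) < (k:ℝ) := by exact_mod_cast Nat.lt_of_lt_of_le Nat.zero_lt_one hk
  obtain ⟨hFm, hFnn, hFint, h0, h1, h2, h3⟩ := hF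
  rw [restrict_UnitSq_eq] at h0 h1 h2 h3
  have hFnn' : ∀ j, ∀ᵐ p : ℝ × ℝ ∂(sqMu.prod sqMu), 0 ≤ F j p.1 p.2 :=
    fun j => restrict_UnitSq_eq ▸ hFnn j
  have hFint' : ∀ j, Integrable (fun p : ℝ × ℝ => F j p.1 p.2) (sqMu.prod sqMu) :=
    fun j => restrict_UnitSq_eq ▸ hFint j
  -- measurability of Q
  have htr : Measurable (truncK (k:ℝ)) := by
    unfold truncK
    exact measurable_id.div (measurable_const.add (measurable_id.div measurable_const))
  have hQmeas : Measurable (fun p : ℝ × ℝ => Qk (k:ℝ) F p.1 p.2) := by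
    unfold Qk
    exact ((htr.comp (hFm 2)).mul (htr.comp (hFm 3))).sub
      ((htr.comp (hFm 0)).mul (htr.comp (hFm 1)))
  -- integrability of Q on the square
  have hQint : Integrable (fun p : ℝ × ℝ => Qk (k:ℝ) F p.1 p.2) (sqMu.prod sqMu) := by
    apply Integrable.mono'
      (((hFint' 2).add (hFint' 0)).const_mul (k:ℝ)) hQmeas.aestronglyMeasurable
    filter_upwards [hFnn' 0, hFnn' 1, hFnn' 2, hFnn' 3] with p p0 p1 p2 p3
    have hA0 : 0 ≤ truncK (k:ℝ) (F 2 p.1 p.2) * truncK (k:ℝ) (F 3 p.1 p.2) :=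
      mul_nonneg (truncK_nonneg' hk0 p2) (truncK_nonneg' hk0 p3)
    have hA1 : truncK (k:ℝ) (F 2 p.1 p.2) * truncK (k:ℝ) (F 3 p.1 p.2)
        ≤ F 2 p.1 p.2 * (k:ℝ) :=
      mul_le_mul (truncK_le_self' hk0 p2) (truncK_le_k' hk0 p3)
        (truncK_nonneg' hk0 p3) p2
    have hB0 : 0 ≤ truncK (k:ℝ) (F 0 p.1 p.2) * truncK (k:ℝ) (F 1 p.1 p.2) :=
      mul_nonneg (truncK_nonneg' hk0 p0) (truncK_nonneg' hk0 p1)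
    have hB1 : truncK (k:ℝ) (F 0 p.1 p.2) * truncK (k:ℝ) (F 1 p.1 p.2)
        ≤ F 0 p.1 p.2 * (k:ℝ) :=
      mul_le_mul (truncK_le_self' hk0 p0) (truncK_le_k' hk0 p1)
        (truncK_nonneg' hk0 p1) p0
    simp only [Pi.add_apply]
    rw [Real.norm_eq_abs, Qk, abs_sub_le_iff]
    constructor <;> nlinarith
  -- slice integrability
  have hly : ∀ᵐ p : ℝ × ℝ ∂(sqMu.prod sqMu),
      Integrable (fun X => Qk (k:ℝ) F X p.2) sqMu :=
    Measure.quasiMeasurePreserving_snd.ae hQint.prod_left_ae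
  have hlx : ∀ᵐ p : ℝ × ℝ ∂(sqMu.prod sqMu),
      Integrable (fun Y => Qk (k:ℝ) F p.1 Y) sqMu :=
    Measure.quasiMeasurePreserving_fst.ae hQint.prod_right_ae
  -- marginal integrals
  have hAint : Integrable (fun y => ∫ X, Qk (k:ℝ) F X y ∂sqMu) sqMu :=
    hQint.swap.integral_prod_left
  have hBint : Integrable (fun x => ∫ Y, Qk (k:ℝ) F x Y ∂sqMu) sqMu :=
    hQint.integral_prod_left
  have haesq : ∀ᵐ p : ℝ × ℝ ∂(sqMu.prod sqMu), p ∈ UnitSq := by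
    rw [← restrict_UnitSq_eq]
    exact ae_restrict_mem (measurableSet_Icc.prod measurableSet_Icc)
  -- min functions on the boundary
  have hm_int : ∀ j, Integrable (fun u => min (fb j u) ((k:ℝ)/2)) sqMu := by
    intro j
    apply Integrable.mono' (integrable_const ((k:ℝ)/2))
      ((hfb j).1.min measurable_const).aestronglyMeasurable
    have : ∀ᵐ u ∂sqMu, u ∈ Icc (0:ℝ) 1 := ae_restrict_mem measurableSet_Icc
    filter_upwards [this] with u hu
    rw [Real.norm_eq_abs, abs_of_nonneg (le_min ((hfb j).2.1 u hu) (by positivity))]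
    exact min_le_right _ _
  have hm_le : ∀ j, ∫ u, min (fb j u) ((k:ℝ)/2) ∂sqMu ≤ ∫ u in Icc (0:ℝ) 1, fb j u := by
    intro j
    exact integral_mono (hm_int j) ((hfb j).2.2) (fun u => min_le_left _ _)
  -- key a.e. identity
  have key : ∀ᵐ p : ℝ × ℝ ∂(sqMu.prod sqMu),
      F 0 p.1 p.2 + F 1 p.1 p.2 + F 2 p.1 p.2 + F 3 p.1 p.2
        = (min (fb 0 p.2) ((k:ℝ)/2) + min (fb 1 p.2) ((k:ℝ)/2))
          + (min (fb 2 p.1) ((k:ℝ)/2) + min (fb 3 p.1) ((k:ℝ)/2))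
          + ((∫ X, Qk (k:ℝ) F X p.2 ∂sqMu) - ∫ Y, Qk (k:ℝ) F p.1 Y ∂sqMu) := by
    filter_upwards [haesq, h0, h1, h2, h3, hly, hlx] with p hp e0 e1 e2 e3 iy ix
    obtain ⟨hx, hy⟩ := hp
    have g1 : IntervalIntegrable (fun X => Qk (k:ℝ) F X p.2) volume 0 p.1 := by
      rw [intervalIntegrable_iff_integrableOn_Ioc_of_le hx.1]
      exact IntegrableOn.mono_set iy (Ioc_subset_Icc_self.trans (Icc_subset_Icc le_rfl hx.2))
    have g2 : IntervalIntegrable (fun X => Qk (k:ℝ) F X p.2) volume p.1 1 := by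
      rw [intervalIntegrable_iff_integrableOn_Ioc_of_le hx.2]
      exact IntegrableOn.mono_set iy (Ioc_subset_Icc_self.trans (Icc_subset_Icc hx.1 le_rfl))
    have gsum : (∫ X in (0:ℝ)..p.1, Qk (k:ℝ) F X p.2)
        + ∫ X in p.1..(1:ℝ), Qk (k:ℝ) F X p.2 = ∫ X in (0:ℝ)..(1:ℝ), Qk (k:ℝ) F X p.2 :=
      intervalIntegral.integral_add_adjacent_intervals g1 g2
    have f1 : IntervalIntegrable (fun Y => Qk (k:ℝ) F p.1 Y) volume 0 p.2 := by
      rw [intervalIntegrable_iff_integrableOn_Ioc_of_le hy.1]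
      exact IntegrableOn.mono_set ix (Ioc_subset_Icc_self.trans (Icc_subset_Icc le_rfl hy.2))
    have f2 : IntervalIntegrable (fun Y => Qk (k:ℝ) F p.1 Y) volume p.2 1 := by
      rw [intervalIntegrable_iff_integrableOn_Ioc_of_le hy.2]
      exact IntegrableOn.mono_set ix (Ioc_subset_Icc_self.trans (Icc_subset_Icc hy.1 le_rfl))
    have fsum : (∫ Y in (0:ℝ)..p.2, Qk (k:ℝ) F p.1 Y)
        + ∫ Y in p.2..(1:ℝ), Qk (k:ℝ) F p.1 Y = ∫ Y in (0:ℝ)..(1:ℝ), Qk (k:ℝ) F p.1 Y :=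
      intervalIntegral.integral_add_adjacent_intervals f1 f2
    have hAy : (∫ X in (0:ℝ)..(1:ℝ), Qk (k:ℝ) F X p.2) = ∫ X, Qk (k:ℝ) F X p.2 ∂sqMu := by
      rw [intervalIntegral.integral_of_le zero_le_one, ← integral_Icc_eq_integral_Ioc]
      rfl
    have hBx : (∫ Y in (0:ℝ)..(1:ℝ), Qk (k:ℝ) F p.1 Y) = ∫ Y, Qk (k:ℝ) F p.1 Y ∂sqMu := by
      rw [intervalIntegral.integral_of_le zero_le_one, ← integral_Icc_eq_integral_Ioc]
      rfl
    rw [e0, e1, e2, e3]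
    linarith
  -- integrability of the pieces
  have ha : Integrable (fun p : ℝ × ℝ => min (fb 0 p.2) ((k:ℝ)/2) + min (fb 1 p.2) ((k:ℝ)/2))
      (sqMu.prod sqMu) := integrable_comp_snd ((hm_int 0).add (hm_int 1))
  have hb : Integrable (fun p : ℝ × ℝ => min (fb 2 p.1) ((k:ℝ)/2) + min (fb 3 p.1) ((k:ℝ)/2))
      (sqMu.prod sqMu) := integrable_comp_fst ((hm_int 2).add (hm_int 3))
  have hc : Integrable (fun p : ℝ × ℝ =>
      (∫ X, Qk (k:ℝ) F X p.2 ∂sqMu) - ∫ Y, Qk (k:ℝ) F p.1 Y ∂sqMu) (sqMu.prod sqMu) :=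
    (integrable_comp_snd hAint).sub (integrable_comp_fst hBint)
  -- total mass computation
  have hsum : (∑ j, ∫ p, F j p.1 p.2 ∂(sqMu.prod sqMu))
      = ∫ p, (F 0 p.1 p.2 + F 1 p.1 p.2 + F 2 p.1 p.2 + F 3 p.1 p.2) ∂(sqMu.prod sqMu) := by
    have t1 : ∫ p, (F 0 p.1 p.2 + F 1 p.1 p.2) ∂(sqMu.prod sqMu)
        = (∫ p, F 0 p.1 p.2 ∂(sqMu.prod sqMu)) + ∫ p, F 1 p.1 p.2 ∂(sqMu.prod sqMu) :=
      integral_add (hFint' 0) (hFint' 1)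
    have t2 : ∫ p, (F 0 p.1 p.2 + F 1 p.1 p.2 + F 2 p.1 p.2) ∂(sqMu.prod sqMu)
        = (∫ p, (F 0 p.1 p.2 + F 1 p.1 p.2) ∂(sqMu.prod sqMu))
          + ∫ p, F 2 p.1 p.2 ∂(sqMu.prod sqMu) :=
      integral_add ((hFint' 0).add (hFint' 1)) (hFint' 2)
    have t3 : ∫ p, (F 0 p.1 p.2 + F 1 p.1 p.2 + F 2 p.1 p.2 + F 3 p.1 p.2) ∂(sqMu.prod sqMu)
        = (∫ p, (F 0 p.1 p.2 + F 1 p.1 p.2 + F 2 p.1 p.2) ∂(sqMu.prod sqMu))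
          + ∫ p, F 3 p.1 p.2 ∂(sqMu.prod sqMu) :=
      integral_add (((hFint' 0).add (hFint' 1)).add (hFint' 2)) (hFint' 3)
    rw [Fin.sum_univ_four, t3, t2, t1]
  have hre : ∫ p, (F 0 p.1 p.2 + F 1 p.1 p.2 + F 2 p.1 p.2 + F 3 p.1 p.2) ∂(sqMu.prod sqMu)
      = ∫ p, ((min (fb 0 p.2) ((k:ℝ)/2) + min (fb 1 p.2) ((k:ℝ)/2))
          + (min (fb 2 p.1) ((k:ℝ)/2) + min (fb 3 p.1) ((k:ℝ)/2))
          + ((∫ X, Qk (k:ℝ) F X p.2 ∂sqMu) - ∫ Y, Qk (k:ℝ) F p.1 Y ∂sqMu))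
          ∂(sqMu.prod sqMu) := integral_congr_ae key
  have hsplit : ∫ p, ((min (fb 0 p.2) ((k:ℝ)/2) + min (fb 1 p.2) ((k:ℝ)/2))
          + (min (fb 2 p.1) ((k:ℝ)/2) + min (fb 3 p.1) ((k:ℝ)/2))
          + ((∫ X, Qk (k:ℝ) F X p.2 ∂sqMu) - ∫ Y, Qk (k:ℝ) F p.1 Y ∂sqMu))
          ∂(sqMu.prod sqMu)
      = (∫ p, (min (fb 0 p.2) ((k:ℝ)/2) + min (fb 1 p.2) ((k:ℝ)/2)) ∂(sqMu.prod sqMu))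
        + (∫ p, (min (fb 2 p.1) ((k:ℝ)/2) + min (fb 3 p.1) ((k:ℝ)/2)) ∂(sqMu.prod sqMu))
        + ((∫ p, (∫ X, Qk (k:ℝ) F X p.2 ∂sqMu) ∂(sqMu.prod sqMu))
          - ∫ p, (∫ Y, Qk (k:ℝ) F p.1 Y ∂sqMu) ∂(sqMu.prod sqMu)) := by
    have s1 : ∫ p, ((min (fb 0 p.2) ((k:ℝ)/2) + min (fb 1 p.2) ((k:ℝ)/2))
          + (min (fb 2 p.1) ((k:ℝ)/2) + min (fb 3 p.1) ((k:ℝ)/2))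
          + ((∫ X, Qk (k:ℝ) F X p.2 ∂sqMu) - ∫ Y, Qk (k:ℝ) F p.1 Y ∂sqMu))
          ∂(sqMu.prod sqMu)
        = (∫ p, ((min (fb 0 p.2) ((k:ℝ)/2) + min (fb 1 p.2) ((k:ℝ)/2))
          + (min (fb 2 p.1) ((k:ℝ)/2) + min (fb 3 p.1) ((k:ℝ)/2))) ∂(sqMu.prod sqMu))
          + ∫ p, ((∫ X, Qk (k:ℝ) F X p.2 ∂sqMu) - ∫ Y, Qk (k:ℝ) F p.1 Y ∂sqMu)
            ∂(sqMu.prod sqMu) := integral_add (ha.add hb) hc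
    have s2 : ∫ p, ((min (fb 0 p.2) ((k:ℝ)/2) + min (fb 1 p.2) ((k:ℝ)/2))
          + (min (fb 2 p.1) ((k:ℝ)/2) + min (fb 3 p.1) ((k:ℝ)/2))) ∂(sqMu.prod sqMu)
        = (∫ p, (min (fb 0 p.2) ((k:ℝ)/2) + min (fb 1 p.2) ((k:ℝ)/2)) ∂(sqMu.prod sqMu))
          + ∫ p, (min (fb 2 p.1) ((k:ℝ)/2) + min (fb 3 p.1) ((k:ℝ)/2)) ∂(sqMu.prod sqMu) :=
      integral_add ha hb
    have s3 : ∫ p, ((∫ X, Qk (k:ℝ) F X p.2 ∂sqMu) - ∫ Y, Qk (k:ℝ) F p.1 Y ∂sqMu)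
          ∂(sqMu.prod sqMu)
        = (∫ p, (∫ X, Qk (k:ℝ) F X p.2 ∂sqMu) ∂(sqMu.prod sqMu))
          - ∫ p, (∫ Y, Qk (k:ℝ) F p.1 Y ∂sqMu) ∂(sqMu.prod sqMu) :=
      integral_sub (integrable_comp_snd hAint) (integrable_comp_fst hBint)
    rw [s1, s2, s3]
  have E1 : ∫ p, (min (fb 0 p.2) ((k:ℝ)/2) + min (fb 1 p.2) ((k:ℝ)/2)) ∂(sqMu.prod sqMu)
      = (∫ u, min (fb 0 u) ((k:ℝ)/2) ∂sqMu) + ∫ u, min (fb 1 u) ((k:ℝ)/2) ∂sqMu := by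
    have g01int : Integrable (fun u => min (fb 0 u) ((k:ℝ)/2) + min (fb 1 u) ((k:ℝ)/2)) sqMu :=
      (hm_int 0).add (hm_int 1)
    exact (integral_comp_snd g01int).trans (integral_add (hm_int 0) (hm_int 1))
  have E2 : ∫ p, (min (fb 2 p.1) ((k:ℝ)/2) + min (fb 3 p.1) ((k:ℝ)/2)) ∂(sqMu.prod sqMu)
      = (∫ u, min (fb 2 u) ((k:ℝ)/2) ∂sqMu) + ∫ u, min (fb 3 u) ((k:ℝ)/2) ∂sqMu := by
    have g23int : Integrable (fun u => min (fb 2 u) ((k:ℝ)/2) + min (fb 3 u) ((k:ℝ)/2)) sqMu :=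
      (hm_int 2).add (hm_int 3)
    exact (integral_comp_fst g23int).trans (integral_add (hm_int 2) (hm_int 3))
  have E3 : ∫ p, (∫ X, Qk (k:ℝ) F X p.2 ∂sqMu) ∂(sqMu.prod sqMu)
      = ∫ y, (∫ X, Qk (k:ℝ) F X y ∂sqMu) ∂sqMu := integral_comp_snd hAint
  have E4 : ∫ p, (∫ Y, Qk (k:ℝ) F p.1 Y ∂sqMu) ∂(sqMu.prod sqMu)
      = ∫ x, (∫ Y, Qk (k:ℝ) F x Y ∂sqMu) ∂sqMu := integral_comp_fst hBint
  have hswap : ∫ x, (∫ Y, Qk (k:ℝ) F x Y ∂sqMu) ∂sqMu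
      = ∫ y, (∫ X, Qk (k:ℝ) F X y ∂sqMu) ∂sqMu :=
    integral_integral_swap (f := fun x y => Qk (k:ℝ) F x y) hQint
  -- conclude
  have hM : (∑ j, ∫ p, F j p.1 p.2 ∂(sqMu.prod sqMu)) ≤ ∑ j, ∫ u in Icc (0:ℝ) 1, fb j u := by
    rw [hsum, hre, hsplit, E1, E2, E3, E4, hswap, Fin.sum_univ_four]
    have := hm_le 0; have := hm_le 1; have := hm_le 2; have := hm_le 3
    linarith
  have hile : (∫ p, F i p.1 p.2 ∂(sqMu.prod sqMu))
      ≤ ∑ j, ∫ p, F j p.1 p.2 ∂(sqMu.prod sqMu) :=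
    Finset.single_le_sum (fun j _ => integral_nonneg_of_ae (hFnn' j)) (Finset.mem_univ i)
  calc (∫ p in UnitSq, F i p.1 p.2) = ∫ p, F i p.1 p.2 ∂(sqMu.prod sqMu) := by
        rw [restrict_UnitSq_eq]
    _ ≤ _ := le_trans hile hM
end
end

section
/- Let f_b be nonnegative boundary data with finite mass and entropy, and for each integer k > 2 let F^k be a nonnegative L¹([0,1]²)⁴ solution of the truncated Broadwell system at level k. Then there is a constant c_b, depending only on f_b, such that for all k > 2 the entropy production satisfies D^k := ∫_{[0,1]²} ((F^k_1/(1+F^k_1/k))(F^k_2/(1+F^k_2/k)) − (F^k_3/(1+F^k_3/k))(F^k_4/(1+F^k_4/k))) · ln( (F^k_1 F^k_2 (1+F^k_3/k)(1+F^k_4/k)) / ((1+F^k_1/k)(1+F^k_2/k) F^k_3 F^k_4) ) dx dy ≤ c_b. -/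
open MeasureTheory Real Set Filter
open scoped Classical Topology ENNReal

noncomputable section

namespace EPB

lemma truncK_nonneg {k a : ℝ} (hk : 0 < k) (ha : 0 ≤ a) : 0 ≤ truncK k a :=
  div_nonneg ha (by positivity)

lemma truncK_le_self {k a : ℝ} (hk : 0 < k) (ha : 0 ≤ a) : truncK k a ≤ a := by
  rw [truncK, div_le_iff₀ (by positivity)]
  nlinarith [div_nonneg ha hk.le]

lemma truncK_le_k {k a : ℝ} (hk : 0 < k) (ha : 0 ≤ a) : truncK k a ≤ k := by
  rw [truncK, div_le_iff₀ (by positivity)]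
  have : 0 ≤ a / k := div_nonneg ha hk.le
  nlinarith [mul_div_cancel₀ a hk.ne']

lemma truncK_mono {k a b : ℝ} (hk : 0 < k) (ha : 0 ≤ a) (hab : a ≤ b) :
    truncK k a ≤ truncK k b := by
  have hb : 0 ≤ b := ha.trans hab
  rw [truncK, truncK, div_le_div_iff₀ (by positivity) (by positivity)]
  have h1 : a * (b / k) ≤ b * (a / k) := by
    rw [mul_div_assoc', mul_div_assoc', mul_comm]
  nlinarith
  
lemma truncK_ge_half {k a : ℝ} (hk : 2 < k) (ha : 0 ≤ a) (ha2 : a ≤ 2) :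
    a / 2 ≤ truncK k a := by
  have hk0 : (0:ℝ) < k := by linarith
  have hd : 1 + a / k ≤ 2 := by
    have : a / k ≤ 2 / k := by gcongr
    have : 2 / k ≤ 1 := by rw [div_le_one hk0]; linarith
    linarith [div_nonneg ha hk0.le]
  rw [truncK]
  exact div_le_div_of_nonneg_left ha (by positivity) hd

lemma truncK_ge_one {k a : ℝ} (hk : 2 < k) (ha : 2 ≤ a) : 1 ≤ truncK k a := by
  have hk0 : (0:ℝ) < k := by linarith
  have ha0 : (0:ℝ) ≤ a := by linarith
  rw [truncK, le_div_iff₀ (by positivity)]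
  have : a / k ≤ a / 2 := by
    apply div_le_div_of_nonneg_left ha0 (by norm_num) (by linarith)
  have : a / 2 ≤ a - 1 := by linarith
  linarith

lemma measurable_truncK (k : ℝ) : Measurable (truncK k) := by
  unfold truncK
  exact measurable_id.div ((measurable_id.div_const k).const_add 1)

end EPB

namespace EPB2

/-- regularized log of truncation -/
def lam (k ε s : ℝ) : ℝ := Real.log (ε + truncK k (max s 0))

/-- primitive of `lam` -/
def psi (k ε s : ℝ) : ℝ := ∫ t in (0:ℝ)..s, lam k ε t

variable {k ε : ℝ}

lemma lam_cont (hk : 0 < k) (hε : 0 < ε) : Continuous (lam k ε) := by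
  have houter : ContinuousOn (fun a : ℝ => Real.log (ε + truncK k a)) (Ici 0) := by
    apply ContinuousOn.log
    · apply ContinuousOn.add continuousOn_const
      apply ContinuousOn.div continuousOn_id
      · fun_prop
      · intro a ha
        have : (0:ℝ) ≤ a / k := div_nonneg ha (le_of_lt hk)
        positivity
    · intro a ha
      have h1 : 0 ≤ truncK k a := EPB.truncK_nonneg hk ha
      positivity
  have : lam k ε = (fun a : ℝ => Real.log (ε + truncK k a)) ∘ (fun s : ℝ => max s 0) := rfl
  rw [this]
  exact houter.comp_continuous (continuous_id.max continuous_const) (fun x => Set.mem_Ici.2 (le_max_right _ _))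

lemma lam_mono (hk : 0 < k) (hε : 0 < ε) : Monotone (lam k ε) := by
  intro a b hab
  have h1 : 0 ≤ truncK k (max a 0) := EPB.truncK_nonneg hk (le_max_right a 0)
  apply Real.log_le_log (by positivity)
  have := EPB.truncK_mono hk (le_max_right a 0) (max_le_max hab (le_refl (0:ℝ)))
  linarith

lemma lam_lb (hk : 0 < k) (hε : 0 < ε) (s : ℝ) : Real.log ε ≤ lam k ε s := by
  have h1 : 0 ≤ truncK k (max s 0) := EPB.truncK_nonneg hk (le_max_right s 0)
  exact Real.log_le_log hε (by linarith)

lemma lam_ub (hk : 0 < k) (hε : 0 < ε) (s : ℝ) : lam k ε s ≤ Real.log (ε + k) := by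
  have h1 := EPB.truncK_le_k hk (le_max_right s 0)
  have h0 : 0 ≤ truncK k (max s 0) := EPB.truncK_nonneg hk (le_max_right s 0)
  exact Real.log_le_log (by positivity) (by linarith)

lemma abs_lam_le (hk : 0 < k) (hε : 0 < ε) (s : ℝ) :
    |lam k ε s| ≤ |Real.log ε| + |Real.log (ε + k)| := by
  have h1 := (neg_abs_le (Real.log ε)).trans (lam_lb hk hε s)
  have h2 := (lam_ub hk hε s).trans (le_abs_self _)
  rw [abs_le]
  constructor <;> [skip; skip] <;>
    [linarith [abs_nonneg (Real.log (ε + k))]; linarith [abs_nonneg (Real.log ε)]]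

lemma lam_nonneg_of_two_le (hk : 2 < k) (hε : 0 < ε) {s : ℝ} (hs : 2 ≤ s) :
    0 ≤ lam k ε s := by
  have hk0 : (0:ℝ) < k := by linarith
  have h1 : 1 ≤ truncK k (max s 0) := EPB.truncK_ge_one hk (le_max_of_le_left hs)
  have : (1:ℝ) ≤ ε + truncK k (max s 0) := by linarith
  simpa [lam] using Real.log_nonneg this

lemma lam_le_log_one_add (hk : 0 < k) (hε : 0 < ε) (hε1 : ε ≤ 1) {s : ℝ} (hs : 0 ≤ s) :
    lam k ε s ≤ Real.log (1 + s) := by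
  have h1 := EPB.truncK_le_self hk (le_max_right s 0)
  have h0 : 0 ≤ truncK k (max s 0) := EPB.truncK_nonneg hk (le_max_right s 0)
  have hmax : max s 0 = s := max_eq_left hs
  rw [hmax] at h1
  apply Real.log_le_log (by positivity)
  rw [hmax]
  linarith

lemma log_ge_aux {u : ℝ} (hu : 0 < u) : 2 - 2 / Real.sqrt u ≤ Real.log u := by
  have hsu : 0 < Real.sqrt u := Real.sqrt_pos.2 hu
  have h := Real.log_le_sub_one_of_pos (x := (Real.sqrt u)⁻¹) (by positivity)
  rw [Real.log_inv, Real.log_sqrt hu.le] at h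
  have : -(Real.log u / 2) ≤ (Real.sqrt u)⁻¹ - 1 := h
  rw [div_eq_mul_inv 2 (Real.sqrt u)]
  linarith

lemma lam_ge_aux (hk : 2 < k) (hε : 0 < ε) {t : ℝ} (ht : 0 < t) (ht2 : t ≤ 2) :
    2 - 2 * Real.sqrt 2 * t ^ (-(1/2) : ℝ) ≤ lam k ε t := by
  have hk0 : (0:ℝ) < k := by linarith
  have hmax : max t 0 = t := max_eq_left ht.le
  have htr : t / 2 ≤ truncK k (max t 0) := by rw [hmax]; exact EPB.truncK_ge_half hk ht.le ht2
  set u := ε + truncK k (max t 0) with hu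
  have hu2 : t / 2 ≤ u := by
    have := EPB.truncK_nonneg hk0 (le_max_right t 0); linarith
  have hu0 : 0 < u := lt_of_lt_of_le (by linarith) hu2
  have h1 : 2 - 2 / Real.sqrt u ≤ Real.log u := log_ge_aux hu0
  have hsqrt : Real.sqrt (t/2) ≤ Real.sqrt u := Real.sqrt_le_sqrt hu2
  have hst : 0 < Real.sqrt (t/2) := Real.sqrt_pos.2 (by linarith)
  have h2 : 2 / Real.sqrt u ≤ 2 / Real.sqrt (t/2) := by
    apply div_le_div_of_nonneg_left (by norm_num) hst hsqrt
  have h3 : Real.sqrt (t/2) = Real.sqrt t / Real.sqrt 2 := Real.sqrt_div ht.le 2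
  have hst2 : 0 < Real.sqrt t := Real.sqrt_pos.2 ht
  have h4 : 2 / Real.sqrt (t/2) = 2 * Real.sqrt 2 / Real.sqrt t := by
    rw [h3]; field_simp
  have h5 : t ^ (-(1/2) : ℝ) = 1 / Real.sqrt t := by
    rw [Real.rpow_neg ht.le, ← Real.sqrt_eq_rpow, one_div]
  rw [h5]
  have h6 : 2 * Real.sqrt 2 * (1 / Real.sqrt t) = 2 * Real.sqrt 2 / Real.sqrt t := by ring
  have hlam : lam k ε t = Real.log u := rfl
  rw [hlam, h6, ← h4]
  linarith

/-- `psi` on `[0,2]` is at least `-4`. -/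
lemma psi_ge_on_small (hk : 2 < k) (hε : 0 < ε) {s : ℝ} (hs : 0 ≤ s) (hs2 : s ≤ 2) :
    -4 ≤ psi k ε s := by
  have hk0 : (0:ℝ) < k := by linarith
  have hglb : ∫ t in (0:ℝ)..s, (2 - 2 * Real.sqrt 2 * t ^ (-(1/2) : ℝ)) ≤ psi k ε s := by
    apply intervalIntegral.integral_mono_ae_restrict hs
    · exact (intervalIntegrable_const).sub
        ((intervalIntegral.intervalIntegrable_rpow' (by norm_num)).const_mul _)
    · exact ((lam_cont hk0 hε).intervalIntegrable 0 s)
    · have h0 : ∀ᵐ t : ℝ ∂(volume.restrict (Icc 0 s)), t ≠ 0 := by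
        apply ae_restrict_of_ae
        rw [ae_iff]
        simp
      filter_upwards [ae_restrict_mem measurableSet_Icc, h0] with t ht ht0
      exact lam_ge_aux hk hε (lt_of_le_of_ne ht.1 (Ne.symm ht0)) (ht.2.trans hs2)
  have hcomp : ∫ t in (0:ℝ)..s, (2 - 2 * Real.sqrt 2 * t ^ (-(1/2) : ℝ))
      = 2 * s - 2 * Real.sqrt 2 * (2 * Real.sqrt s) := by
    rw [intervalIntegral.integral_sub intervalIntegrable_const
        ((intervalIntegral.intervalIntegrable_rpow' (by norm_num)).const_mul _),
      intervalIntegral.integral_const_mul, intervalIntegral.integral_const,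
      integral_rpow (Or.inl (by norm_num))]
    have : (-(1/2) : ℝ) + 1 = 1/2 := by norm_num
    rw [this]
    rw [← Real.sqrt_eq_rpow, ← Real.sqrt_eq_rpow]
    simp [Real.sqrt_zero]
    ring
  rw [hcomp] at hglb
  have h2 : Real.sqrt 2 ^ 2 = 2 := Real.sq_sqrt (by norm_num)
  have h3 : Real.sqrt s ^ 2 = s := Real.sq_sqrt hs
  nlinarith [sq_nonneg (Real.sqrt s - Real.sqrt 2), Real.sqrt_nonneg s, Real.sqrt_nonneg 2]

lemma psi_ge (hk : 2 < k) (hε : 0 < ε) (hε1 : ε ≤ 1) (s : ℝ) : -4 ≤ psi k ε s := by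
  have hk0 : (0:ℝ) < k := by linarith
  have hlamint : ∀ a b : ℝ, IntervalIntegrable (lam k ε) volume a b :=
    fun a b => (lam_cont hk0 hε).intervalIntegrable a b
  rcases le_or_gt s 0 with hs | hs
  · have : psi k ε s = - ∫ t in s..(0:ℝ), lam k ε t := by
      rw [psi, ← intervalIntegral.integral_symm]
    rw [this]
    have hle : ∫ t in s..(0:ℝ), lam k ε t ≤ ∫ t in s..(0:ℝ), (0:ℝ) := by
      apply intervalIntegral.integral_mono_on hs (hlamint s 0) intervalIntegrable_const
      intro t ht
      have hmax : max t 0 = 0 := max_eq_right ht.2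
      have : lam k ε t = Real.log ε := by
        rw [lam, hmax]
        norm_num [truncK]
      rw [this]
      exact Real.log_nonpos hε.le hε1
    simp only [intervalIntegral.integral_zero] at hle
    linarith
  · rcases le_or_gt s 2 with hs2 | hs2
    · exact psi_ge_on_small hk hε hs.le hs2
    · have hsplit : psi k ε 2 + ∫ t in (2:ℝ)..s, lam k ε t = psi k ε s :=
        intervalIntegral.integral_add_adjacent_intervals (hlamint 0 2) (hlamint 2 s)
      have h1 : -4 ≤ psi k ε 2 := psi_ge_on_small hk hε (by norm_num) (by norm_num)
      have h2 : 0 ≤ ∫ t in (2:ℝ)..s, lam k ε t := by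
        apply intervalIntegral.integral_nonneg (by linarith)
        intro t ht
        exact lam_nonneg_of_two_le hk hε ht.1
      linarith

lemma psi_le (hk : 0 < k) (hε : 0 < ε) (hε1 : ε ≤ 1) {s : ℝ} (hs : 0 ≤ s) :
    psi k ε s ≤ s * Real.log (1 + s) := by
  have hcont : ContinuousOn (fun t : ℝ => Real.log (1 + t)) (Icc 0 s) := by
    apply ContinuousOn.log (by fun_prop)
    intro t ht
    have := ht.1
    positivity
  have hint : IntervalIntegrable (fun t : ℝ => Real.log (1 + t)) volume 0 s := by
    apply ContinuousOn.intervalIntegrable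
    rwa [uIcc_of_le hs]
  have h1 : psi k ε s ≤ ∫ t in (0:ℝ)..s, Real.log (1 + t) := by
    apply intervalIntegral.integral_mono_on hs ((lam_cont hk hε).intervalIntegrable 0 s) hint
    intro t ht
    exact lam_le_log_one_add hk hε hε1 ht.1
  have h2 : ∫ t in (0:ℝ)..s, Real.log (1 + t) ≤ ∫ t in (0:ℝ)..s, Real.log (1 + s) := by
    apply intervalIntegral.integral_mono_on hs hint intervalIntegrable_const
    intro t ht
    apply Real.log_le_log (by linarith [ht.1]) (by linarith [ht.2])
  rw [intervalIntegral.integral_const, smul_eq_mul, sub_zero] at h2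
  linarith

end EPB2


namespace EPB3
open intervalIntegral

/-- Riemann-sum approximation: for any tagged uniform partition, the Riemann–Stieltjes type sum
is close to the integral. -/
lemma riemann_close (q : ℝ → ℝ) (hq : IntervalIntegrable q volume 0 1)
    (Λ : ℝ → ℝ) (hΛc : Continuous Λ)
    (G : ℝ → ℝ) (hG : ∀ x, G x = G 0 + ∫ t in (0:ℝ)..x, q t)
    (hGc : ContinuousOn G (Icc 0 1))
    {ε' δ : ℝ} (hε' : 0 ≤ ε') (hδ : 0 < δ)
    (hδmod : ∀ x ∈ Icc (0:ℝ) 1, ∀ y ∈ Icc (0:ℝ) 1, dist x y < δ →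
      dist (Λ (G x)) (Λ (G y)) < ε')
    (N : ℕ) (hN1 : 1 ≤ N) (hNδ : 1 / (N:ℝ) < δ)
    (ξ : ℕ → ℝ) (hξ : ∀ j < N, ξ j ∈ Icc ((j:ℝ)/N) (((j+1:ℕ):ℝ)/N)) :
    |(∑ j ∈ Finset.range N, Λ (G (ξ j)) * (G (((j+1:ℕ):ℝ)/N) - G ((j:ℝ)/N)))
      - ∫ x in (0:ℝ)..1, q x * Λ (G x)| ≤ ε' * ∫ x in (0:ℝ)..1, |q x| := by
  have hNpos : (0:ℝ) < N := by exact_mod_cast hN1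
  set a : ℕ → ℝ := fun j => (j:ℝ)/N with ha_def
  have hmono : ∀ j : ℕ, a j ≤ a (j+1) := by
    intro j
    have h1 : ((j:ℕ):ℝ) ≤ ((j+1:ℕ):ℝ) := by push_cast; linarith
    exact (div_le_div_iff_of_pos_right hNpos).mpr h1
  have hmem : ∀ j : ℕ, j ≤ N → a j ∈ Icc (0:ℝ) 1 := by
    intro j hj
    constructor
    · positivity
    · rw [div_le_one hNpos]; exact_mod_cast hj
  have hsub : ∀ j : ℕ, j < N → uIcc (a j) (a (j+1)) ⊆ Icc (0:ℝ) 1 := by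
    intro j hj
    rw [uIcc_of_le (hmono j)]
    exact Icc_subset_Icc (hmem j hj.le).1 (hmem (j+1) hj).2
  have hIcc01 : uIcc (0:ℝ) 1 = Icc 0 1 := uIcc_of_le zero_le_one
  have hqsub : ∀ j : ℕ, j < N → IntervalIntegrable q volume (a j) (a (j+1)) := by
    intro j hj
    exact hq.mono_set (by rw [hIcc01]; exact hsub j hj)
  have hq0 : ∀ j : ℕ, j ≤ N → IntervalIntegrable q volume 0 (a j) := by
    intro j hj
    apply hq.mono_set
    rw [hIcc01, uIcc_of_le (hmem j hj).1]
    exact Icc_subset_Icc le_rfl (hmem j hj).2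
  have hΛG : ContinuousOn (fun x => Λ (G x)) (Icc (0:ℝ) 1) := hΛc.comp_continuousOn hGc
  have hfint : ∀ j : ℕ, j < N →
      IntervalIntegrable (fun x => q x * Λ (G x)) volume (a j) (a (j+1)) := by
    intro j hj
    exact (hqsub j hj).mul_continuousOn (hΛG.mono (hsub j hj))
  have hqabs : ∀ j : ℕ, j < N → IntervalIntegrable (fun x => |q x|) volume (a j) (a (j+1)) :=
    fun j hj => (hqsub j hj).abs
  have ha0 : a 0 = 0 := by simp [ha_def]
  have haN : a N = 1 := by show (N:ℝ)/N = 1; exact div_self hNpos.ne'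
  have hΔ : ∀ j : ℕ, j < N → G (a (j+1)) - G (a j) = ∫ x in (a j)..(a (j+1)), q x := by
    intro j hj
    rw [hG (a (j+1)), hG (a j)]
    have := integral_interval_sub_left (hq0 (j+1) hj) (hq0 j hj.le)
    rw [add_sub_add_left_eq_sub, this]
  have hIsplit : ∫ x in (0:ℝ)..1, q x * Λ (G x)
      = ∑ j ∈ Finset.range N, ∫ x in (a j)..(a (j+1)), q x * Λ (G x) := by
    have := sum_integral_adjacent_intervals hfint
    rw [ha0, haN] at this
    exact this.symm
  have hQsplit : ∫ x in (0:ℝ)..1, |q x|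
      = ∑ j ∈ Finset.range N, ∫ x in (a j)..(a (j+1)), |q x| := by
    have := sum_integral_adjacent_intervals hqabs
    rw [ha0, haN] at this
    exact this.symm
  have hterm : ∀ j ∈ Finset.range N,
      |Λ (G (ξ j)) * (G (a (j+1)) - G (a j)) - ∫ x in (a j)..(a (j+1)), q x * Λ (G x)|
        ≤ ε' * ∫ x in (a j)..(a (j+1)), |q x| := by
    intro j hjmem
    have hj : j < N := Finset.mem_range.1 hjmem
    have hξj : ξ j ∈ Icc (a j) (a (j+1)) := hξ j hj
    have hconst : Λ (G (ξ j)) * (G (a (j+1)) - G (a j))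
        = ∫ x in (a j)..(a (j+1)), Λ (G (ξ j)) * q x := by
      rw [intervalIntegral.integral_const_mul, hΔ j hj]
    rw [hconst, ← intervalIntegral.integral_sub ((hqsub j hj).const_mul _) (hfint j hj)]
    have habs : |∫ x in (a j)..(a (j+1)), (Λ (G (ξ j)) * q x - q x * Λ (G x))|
        ≤ ∫ x in (a j)..(a (j+1)), |Λ (G (ξ j)) * q x - q x * Λ (G x)| :=
      intervalIntegral.abs_integral_le_integral_abs (hmono j)
    refine habs.trans ?_
    rw [← intervalIntegral.integral_const_mul]
    apply intervalIntegral.integral_mono_on (hmono j)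
      (((hqsub j hj).const_mul _).sub (hfint j hj)).abs ((hqabs j hj).const_mul _)
    intro x hx
    have hxI : x ∈ Icc (0:ℝ) 1 := (hsub j hj) (by rw [uIcc_of_le (hmono j)]; exact hx)
    have hξI : ξ j ∈ Icc (0:ℝ) 1 := (hsub j hj) (by rw [uIcc_of_le (hmono j)]; exact hξj)
    have hdist : dist (ξ j) x < δ := by
      rw [Real.dist_eq]
      have h1 : |ξ j - x| ≤ a (j+1) - a j := by
        rw [abs_sub_le_iff]
        constructor
        · linarith [hξj.2, hx.1]
        · linarith [hξj.1, hx.2]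
      have h2 : a (j+1) - a j = 1/(N:ℝ) := by
        simp only [ha_def]
        push_cast
        field_simp
        ring
      rw [h2] at h1
      linarith
    have hmod := hδmod (ξ j) hξI x hxI hdist
    rw [Real.dist_eq] at hmod
    have hre : Λ (G (ξ j)) * q x - q x * Λ (G x) = q x * (Λ (G (ξ j)) - Λ (G x)) := by ring
    rw [hre, abs_mul]
    calc |q x| * |Λ (G (ξ j)) - Λ (G x)| ≤ |q x| * ε' :=
          mul_le_mul_of_nonneg_left hmod.le (abs_nonneg _)
      _ = ε' * |q x| := mul_comm _ _
  calc |(∑ j ∈ Finset.range N, Λ (G (ξ j)) * (G (a (j+1)) - G (a j)))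
        - ∫ x in (0:ℝ)..1, q x * Λ (G x)|
      = |∑ j ∈ Finset.range N, (Λ (G (ξ j)) * (G (a (j+1)) - G (a j))
          - ∫ x in (a j)..(a (j+1)), q x * Λ (G x))| := by
        rw [hIsplit, Finset.sum_sub_distrib]
    _ ≤ ∑ j ∈ Finset.range N, |Λ (G (ξ j)) * (G (a (j+1)) - G (a j))
          - ∫ x in (a j)..(a (j+1)), q x * Λ (G x)| := Finset.abs_sum_le_sum_abs _ _
    _ ≤ ∑ j ∈ Finset.range N, ε' * ∫ x in (a j)..(a (j+1)), |q x| := Finset.sum_le_sum hterm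
    _ = ε' * ∫ x in (0:ℝ)..1, |q x| := by rw [← Finset.mul_sum, hQsplit]



/-- Key 1D identity: for `G` a primitive of an integrable `q` and `Λ` monotone continuous,
`∫₀¹ q Λ(G) = Ψ(G 1) - Ψ(G 0)` where `Ψ` is the primitive of `Λ`. -/
lemma key1D (q : ℝ → ℝ) (hq : IntervalIntegrable q volume 0 1)
    (Λ : ℝ → ℝ) (hΛc : Continuous Λ) (hΛm : Monotone Λ) (c : ℝ) :
    ∫ x in (0:ℝ)..1, q x * Λ (c + ∫ t in (0:ℝ)..x, q t)
      = (∫ t in (0:ℝ)..(c + ∫ t in (0:ℝ)..1, q t), Λ t) - ∫ t in (0:ℝ)..c, Λ t := by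
  set G : ℝ → ℝ := fun x => c + ∫ t in (0:ℝ)..x, q t with hG_def
  set Ψ : ℝ → ℝ := fun v => ∫ t in (0:ℝ)..v, Λ t with hΨ_def
  have hG0 : G 0 = c := by simp [hG_def]
  have hG : ∀ x, G x = G 0 + ∫ t in (0:ℝ)..x, q t := by intro x; rw [hG0]
  have hIcc01 : uIcc (0:ℝ) 1 = Icc 0 1 := uIcc_of_le zero_le_one
  have hGc : ContinuousOn G (Icc (0:ℝ) 1) := by
    apply continuousOn_const.add
    have := intervalIntegral.continuousOn_primitive_interval
      (μ := volume) (f := q) (a := 0) (b := 1) (by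
        rw [hIcc01]
        exact (intervalIntegrable_iff_integrableOn_Icc_of_le zero_le_one).1 hq)
    rwa [hIcc01] at this
  have hΛint : ∀ u v : ℝ, IntervalIntegrable Λ volume u v := fun u v => hΛc.intervalIntegrable u v
  -- convexity sandwich
  have hsand : ∀ u v : ℝ, Λ u * (v - u) ≤ Ψ v - Ψ u ∧ Ψ v - Ψ u ≤ Λ v * (v - u) := by
    intro u v
    have hdiff : Ψ v - Ψ u = ∫ t in u..v, Λ t :=
      integral_interval_sub_left (hΛint 0 v) (hΛint 0 u)
    rcases le_total u v with huv | hvu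
    · constructor
      · rw [hdiff]
        have : ∫ t in u..v, Λ u ≤ ∫ t in u..v, Λ t := by
          apply intervalIntegral.integral_mono_on huv intervalIntegrable_const (hΛint u v)
          exact fun t ht => hΛm ht.1
        rw [intervalIntegral.integral_const, smul_eq_mul, mul_comm] at this
        linarith
      · rw [hdiff]
        have : ∫ t in u..v, Λ t ≤ ∫ t in u..v, Λ v := by
          apply intervalIntegral.integral_mono_on huv (hΛint u v) intervalIntegrable_const
          exact fun t ht => hΛm ht.2
        rw [intervalIntegral.integral_const, smul_eq_mul, mul_comm] at this
        linarith
    · have hdiff' : Ψ v - Ψ u = - ∫ t in v..u, Λ t := by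
        rw [hdiff, intervalIntegral.integral_symm]
      constructor
      · rw [hdiff']
        have : ∫ t in v..u, Λ t ≤ ∫ t in v..u, Λ u := by
          apply intervalIntegral.integral_mono_on hvu (hΛint v u) intervalIntegrable_const
          exact fun t ht => hΛm ht.2
        rw [intervalIntegral.integral_const, smul_eq_mul, mul_comm] at this
        nlinarith [this]
      · rw [hdiff']
        have : ∫ t in v..u, Λ v ≤ ∫ t in v..u, Λ t := by
          apply intervalIntegral.integral_mono_on hvu intervalIntegrable_const (hΛint v u)
          exact fun t ht => hΛm ht.1
        rw [intervalIntegral.integral_const, smul_eq_mul, mul_comm] at this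
        nlinarith [this]
  set I : ℝ := ∫ x in (0:ℝ)..1, q x * Λ (G x) with hI_def
  set J : ℝ := Ψ (G 1) - Ψ (G 0) with hJ_def
  have hQ1 : (0:ℝ) ≤ ∫ x in (0:ℝ)..1, |q x| :=
    intervalIntegral.integral_nonneg zero_le_one (fun t _ => abs_nonneg _)
  -- main two-sided estimate
  have hmain : ∀ ε : ℝ, 0 < ε → |J - I| ≤ ε := by
    intro ε hε
    set Q1 : ℝ := ∫ x in (0:ℝ)..1, |q x| with hQ1_def
    set ε' : ℝ := ε / (Q1 + 1) with hε'_def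
    have hε'pos : 0 < ε' := by apply div_pos hε; linarith
    -- uniform continuity of Λ ∘ G on [0,1]
    have hK : UniformContinuousOn (fun x => Λ (G x)) (Icc (0:ℝ) 1) :=
      isCompact_Icc.uniformContinuousOn_of_continuous (hΛc.comp_continuousOn hGc)
    obtain ⟨δ, hδpos, hδmod⟩ := (Metric.uniformContinuousOn_iff).1 hK ε' hε'pos
    obtain ⟨N₀, hN₀⟩ := exists_nat_one_div_lt hδpos
    set N : ℕ := N₀ + 1 with hN_def
    have hN1 : 1 ≤ N := Nat.le_add_left 1 N₀
    have hNδ : 1 / (N:ℝ) < δ := by exact_mod_cast hN₀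
    have hNpos : (0:ℝ) < N := by exact_mod_cast hN1
    have hmemp : ∀ j : ℕ, j ≤ N → (j:ℝ)/N ∈ Icc (0:ℝ) 1 := by
      intro j hj
      constructor
      · positivity
      · rw [div_le_one hNpos]; exact_mod_cast hj
    have hmono' : ∀ j : ℕ, (j:ℝ)/N ≤ ((j+1:ℕ):ℝ)/N := by
      intro j
      apply (div_le_div_iff_of_pos_right hNpos).mpr
      push_cast; linarith
    have hδmod' : ∀ x ∈ Icc (0:ℝ) 1, ∀ y ∈ Icc (0:ℝ) 1, dist x y < δ →
        dist (Λ (G x)) (Λ (G y)) < ε' := fun x hx y hy hd => hδmod x hx y hy hd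
    -- telescoping
    have htel : J = ∑ j ∈ Finset.range N, (Ψ (G (((j+1:ℕ):ℝ)/N)) - Ψ (G ((j:ℝ)/N))) := by
      rw [Finset.sum_range_sub (fun j => Ψ (G ((j:ℝ)/N)))]
      have h1 : ((N:ℝ))/N = 1 := div_self hNpos.ne'
      have h0 : ((0:ℕ):ℝ)/N = 0 := by simp
      rw [h1, h0]
    -- left endpoints
    have hL := riemann_close q hq Λ hΛc G hG hGc hε'pos.le hδpos hδmod' N hN1 hNδ
      (fun j => (j:ℝ)/N) (fun j hj => ⟨le_refl _, hmono' j⟩)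
    -- right endpoints
    have hR := riemann_close q hq Λ hΛc G hG hGc hε'pos.le hδpos hδmod' N hN1 hNδ
      (fun j => ((j+1:ℕ):ℝ)/N) (fun j hj => ⟨hmono' j, le_refl _⟩)
    have hJleR : J ≤ ∑ j ∈ Finset.range N, Λ (G (((j+1:ℕ):ℝ)/N))
        * (G (((j+1:ℕ):ℝ)/N) - G ((j:ℝ)/N)) := by
      rw [htel]
      apply Finset.sum_le_sum
      intro j _
      exact (hsand (G ((j:ℝ)/N)) (G (((j+1:ℕ):ℝ)/N))).2
    have hJgeL : (∑ j ∈ Finset.range N, Λ (G ((j:ℝ)/N))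
        * (G (((j+1:ℕ):ℝ)/N) - G ((j:ℝ)/N))) ≤ J := by
      rw [htel]
      apply Finset.sum_le_sum
      intro j _
      exact (hsand (G ((j:ℝ)/N)) (G (((j+1:ℕ):ℝ)/N))).1
    have hbound : ε' * Q1 ≤ ε := by
      rw [hε'_def, div_mul_eq_mul_div, div_le_iff₀ (by linarith : (0:ℝ) < Q1 + 1)]
      nlinarith
    have hL' := hL
    have hR' := hR
    beta_reduce at hL' hR'
    rw [abs_le]
    constructor
    · have h1 := (abs_le.1 hL').1
      linarith [hJgeL, hbound]
    · have h2 := (abs_le.1 hR').2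
      linarith [hJleR, hbound]
  have : |J - I| ≤ 0 := by
    by_contra h
    push_neg at h
    have := hmain (|J - I|/2) (by linarith)
    linarith
  have : J = I := by
    have := abs_nonpos_iff.1 (this)
    linarith [sub_eq_zero.1 this]
  have hgoal : I = Ψ (G 1) - Ψ (G 0) := this.symm
  rw [hG0] at hgoal
  exact hgoal

end EPB3


section Assembly

namespace EPB4

open EPB EPB2 EPB3

/-- shorthand for the restricted 1D measure -/
def muI : Measure ℝ := volume.restrict (Icc (0:ℝ) 1)

lemma muI_def : muI = volume.restrict (Icc (0:ℝ) 1) := rfl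

lemma muI_univ : muI univ = 1 := by
  rw [muI, Measure.restrict_apply_univ, Real.volume_Icc]
  norm_num

instance : IsFiniteMeasure muI := ⟨by rw [muI_univ]; exact ENNReal.one_lt_top⟩

lemma meas_sq : (volume.restrict UnitSq) = muI.prod muI := by
  rw [muI, Measure.prod_restrict, UnitSq, ← Measure.volume_eq_prod]

lemma vol_sq : (volume.restrict UnitSq) univ = 1 := by
  rw [meas_sq, Measure.prod_apply MeasurableSet.univ]
  simp [muI_univ]

instance : IsFiniteMeasure (volume.restrict UnitSq) :=
  ⟨by rw [vol_sq]; exact ENNReal.one_lt_top⟩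

lemma ae_sec_x {P : ℝ → ℝ → Prop}
    (h : ∀ᵐ p : ℝ × ℝ ∂(volume.restrict UnitSq), P p.1 p.2) :
    ∀ᵐ x ∂muI, ∀ᵐ y ∂muI, P x y := by
  rw [meas_sq] at h
  exact Measure.ae_ae_of_ae_prod h

lemma ae_sec_y {P : ℝ → ℝ → Prop}
    (h : ∀ᵐ p : ℝ × ℝ ∂(volume.restrict UnitSq), P p.1 p.2) :
    ∀ᵐ y ∂muI, ∀ᵐ x ∂muI, P x y := by
  rw [meas_sq] at h
  have hqmp : Measure.QuasiMeasurePreserving (Prod.swap : ℝ × ℝ → ℝ × ℝ)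
      (muI.prod muI) (muI.prod muI) :=
    (Measure.measurePreserving_swap (μ := muI) (ν := muI)).quasiMeasurePreserving
  have hswap : ∀ᵐ w : ℝ × ℝ ∂(muI.prod muI), P w.2 w.1 := hqmp.ae h
  exact Measure.ae_ae_of_ae_prod hswap

/-- flux formula for a section which is a primitive of an integrable function -/
lemma flux_formula {k ε : ℝ} (hk : 2 < k) (hε : 0 < ε)
    (qy : ℝ → ℝ) (hqy : IntervalIntegrable qy volume 0 1)
    (h : ℝ → ℝ) (c : ℝ)
    (hae : ∀ᵐ x ∂muI, h x = c + ∫ t in (0:ℝ)..x, qy t) :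
    ∫ x in Icc (0:ℝ) 1, qy x * lam k ε (h x)
      = psi k ε (c + ∫ t in (0:ℝ)..1, qy t) - psi k ε c := by
  have hk0 : (0:ℝ) < k := by linarith
  have h1 : ∫ x in Icc (0:ℝ) 1, qy x * lam k ε (h x)
      = ∫ x in Icc (0:ℝ) 1, qy x * lam k ε (c + ∫ t in (0:ℝ)..x, qy t) := by
    apply integral_congr_ae
    filter_upwards [hae] with x hx
    rw [hx]
  rw [h1]
  have h2 : ∫ x in Icc (0:ℝ) 1, qy x * lam k ε (c + ∫ t in (0:ℝ)..x, qy t)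
      = ∫ x in (0:ℝ)..1, qy x * lam k ε (c + ∫ t in (0:ℝ)..x, qy t) := by
    rw [MeasureTheory.integral_Icc_eq_integral_Ioc,
      intervalIntegral.integral_of_le zero_le_one]
  rw [h2]
  exact key1D qy hqy (lam k ε) (lam_cont hk0 hε) (lam_mono hk0 hε) c

/-- The regularized entropy-production integral is bounded by boundary entropy. -/
lemma Deps_bound (fb : Fin 4 → ℝ → ℝ) (hfb : IsBoundaryData fb) (hent : FiniteEntropy fb)
    (k : ℝ) (hk : 2 < k) (F : Fin 4 → ℝ → ℝ → ℝ) (hM : MildTrunc k fb F)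
    (ε : ℝ) (hε : 0 < ε) (hε1 : ε ≤ 1/k) :
    ∫ p in UnitSq, Qk k F p.1 p.2 *
        (lam k ε (F 2 p.1 p.2) + lam k ε (F 3 p.1 p.2)
          - lam k ε (F 0 p.1 p.2) - lam k ε (F 1 p.1 p.2))
      ≤ (∑ i, ∫ u in Icc (0:ℝ) 1, fb i u * Real.log (1 + fb i u)) + 16 := by
  obtain ⟨hFmeas, hFpos, hFint, he0, he1, he2, he3⟩ := hM
  have hk0 : (0:ℝ) < k := by linarith
  have hεk : ε ≤ 1 := by
    refine hε1.trans ?_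
    rw [div_le_one hk0]; linarith
  have hFm : ∀ i, Measurable (fun p : ℝ × ℝ => F i p.1 p.2) := fun i => hFmeas i
  have hQm : Measurable (fun p : ℝ × ℝ => Qk k F p.1 p.2) := by
    simp only [Qk]
    exact (((measurable_truncK k).comp (hFm 2)).mul ((measurable_truncK k).comp (hFm 3))).sub
      (((measurable_truncK k).comp (hFm 0)).mul ((measurable_truncK k).comp (hFm 1)))
  have hpos4 : ∀ᵐ p : ℝ × ℝ ∂(volume.restrict UnitSq), ∀ i, 0 ≤ F i p.1 p.2 := by
    filter_upwards [hFpos 0, hFpos 1, hFpos 2, hFpos 3] with p h0 h1 h2 h3 i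
    fin_cases i <;> assumption
  have hQbd : ∀ p : ℝ × ℝ, (∀ i, 0 ≤ F i p.1 p.2) → |Qk k F p.1 p.2| ≤ 2 * k ^ 2 := by
    intro p hp
    have t0 := EPB.truncK_nonneg hk0 (hp 0)
    have t1 := EPB.truncK_nonneg hk0 (hp 1)
    have t2 := EPB.truncK_nonneg hk0 (hp 2)
    have t3 := EPB.truncK_nonneg hk0 (hp 3)
    have u0 := EPB.truncK_le_k hk0 (hp 0)
    have u1 := EPB.truncK_le_k hk0 (hp 1)
    have u2 := EPB.truncK_le_k hk0 (hp 2)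
    have u3 := EPB.truncK_le_k hk0 (hp 3)
    rw [Qk, abs_le]
    constructor <;> nlinarith
  set Mb : ℝ := |Real.log ε| + |Real.log (ε + k)| with hMb_def
  have hMb0 : 0 ≤ Mb := by positivity
  have hlam_bd : ∀ s, |lam k ε s| ≤ Mb := abs_lam_le hk0 hε
  have hint_piece : ∀ i, Integrable
      (fun p : ℝ × ℝ => Qk k F p.1 p.2 * lam k ε (F i p.1 p.2))
      (volume.restrict UnitSq) := by
    intro i
    apply Integrable.mono' (integrable_const (2 * k ^ 2 * Mb))
    · exact (hQm.mul ((lam_cont hk0 hε).measurable.comp (hFm i))).aestronglyMeasurable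
    · filter_upwards [hpos4] with p hp
      rw [norm_eq_abs, abs_mul]
      exact mul_le_mul (hQbd p hp) (hlam_bd _) (abs_nonneg _) (by positivity)
  -- block 0 : lower bound for T₀
  have hT0 : -4 - (∫ u in Icc (0:ℝ) 1, fb 0 u * Real.log (1 + fb 0 u))
      ≤ ∫ p in UnitSq, Qk k F p.1 p.2 * lam k ε (F 0 p.1 p.2) := by
    have hg : Integrable (fun p : ℝ × ℝ => Qk k F p.1 p.2 * lam k ε (F 0 p.1 p.2))
        (muI.prod muI) := by rw [← meas_sq]; exact hint_piece 0
    have hiter : (∫ p in UnitSq, Qk k F p.1 p.2 * lam k ε (F 0 p.1 p.2))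
        = ∫ y, (∫ x, Qk k F x y * lam k ε (F 0 x y) ∂muI) ∂muI := by
      rw [show (volume.restrict UnitSq) = muI.prod muI from meas_sq,
        MeasureTheory.integral_prod _ hg]
      exact integral_integral_swap hg
    have hInner : Integrable (fun y => ∫ x, Qk k F x y * lam k ε (F 0 x y) ∂muI) muI := by
      have := hg.swap.integral_prod_left
      simpa [Function.comp] using this
    have hsec_eq : ∀ᵐ y ∂muI, ∀ᵐ x ∂muI,
        F 0 x y = min (fb 0 y) (k/2) + ∫ X in (0:ℝ)..x, Qk k F X y :=
      ae_sec_y (P := fun x y => F 0 x y = min (fb 0 y) (k/2) + ∫ X in (0:ℝ)..x, Qk k F X y) he0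
    have hsec_pos : ∀ᵐ y ∂muI, ∀ᵐ x ∂muI, ∀ i, 0 ≤ F i x y :=
      ae_sec_y (P := fun x y => ∀ i, 0 ≤ F i x y) hpos4
    have hy_mem : ∀ᵐ y ∂muI, y ∈ Icc (0:ℝ) 1 := ae_restrict_mem measurableSet_Icc
    have hkey : ∀ᵐ y ∂muI, -4 - fb 0 y * Real.log (1 + fb 0 y)
        ≤ ∫ x, Qk k F x y * lam k ε (F 0 x y) ∂muI := by
      filter_upwards [hsec_eq, hsec_pos, hy_mem] with y heq hpos hy
      have hqys : Measurable (fun x => Qk k F x y) :=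
        hQm.comp (measurable_id.prodMk measurable_const)
      have hqbd' : ∀ᵐ x ∂muI, ‖Qk k F x y‖ ≤ 2 * k ^ 2 := by
        filter_upwards [hpos] with x hx
        exact hQbd (x, y) hx
      have hqint : Integrable (fun x => Qk k F x y) muI :=
        Integrable.mono' (integrable_const (2 * k ^ 2)) hqys.aestronglyMeasurable hqbd'
      have hqiv : IntervalIntegrable (fun x => Qk k F x y) volume 0 1 :=
        (intervalIntegrable_iff_integrableOn_Icc_of_le zero_le_one).2 hqint
      have hflux := flux_formula hk hε (fun x => Qk k F x y) hqiv
        (fun x => F 0 x y) (min (fb 0 y) (k/2)) heq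
      have hfb0 : 0 ≤ fb 0 y := (hfb 0).2.1 y hy
      have hm0 : 0 ≤ min (fb 0 y) (k/2) := le_min hfb0 (by positivity)
      have h1 : psi k ε (min (fb 0 y) (k/2)) ≤ fb 0 y * Real.log (1 + fb 0 y) := by
        refine (psi_le hk0 hε hεk hm0).trans ?_
        have hmf : min (fb 0 y) (k/2) ≤ fb 0 y := min_le_left _ _
        exact mul_le_mul hmf (Real.log_le_log (by linarith) (by linarith))
          (Real.log_nonneg (by linarith)) hfb0
      have h2 := psi_ge hk hε hεk
        (min (fb 0 y) (k/2) + ∫ t in (0:ℝ)..1, Qk k F t y)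
      have hIccInt : (∫ x, Qk k F x y * lam k ε (F 0 x y) ∂muI)
          = ∫ x in Icc (0:ℝ) 1, Qk k F x y * lam k ε (F 0 x y) := rfl
      rw [hIccInt, hflux]
      linarith
    have hminor : Integrable (fun y => -4 - fb 0 y * Real.log (1 + fb 0 y)) muI :=
      (integrable_const (-4)).sub (hent 0)
    have hmono := integral_mono_ae hminor hInner hkey
    have hconstint : ∫ y, (-4 - fb 0 y * Real.log (1 + fb 0 y)) ∂muI
        = -4 - ∫ u in Icc (0:ℝ) 1, fb 0 u * Real.log (1 + fb 0 u) := by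
      rw [muI_def, integral_sub (integrable_const (-4)) (hent 0), integral_const,
        measureReal_restrict_apply_univ, Real.volume_real_Icc]
      norm_num
    rw [hiter]
    rw [hconstint] at hmono
    exact hmono
  -- block 1 : lower bound for T₁
  have hT1 : -4 - (∫ u in Icc (0:ℝ) 1, fb 1 u * Real.log (1 + fb 1 u))
      ≤ ∫ p in UnitSq, Qk k F p.1 p.2 * lam k ε (F 1 p.1 p.2) := by
    have hg : Integrable (fun p : ℝ × ℝ => Qk k F p.1 p.2 * lam k ε (F 1 p.1 p.2))
        (muI.prod muI) := by rw [← meas_sq]; exact hint_piece 1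
    have hiter : (∫ p in UnitSq, Qk k F p.1 p.2 * lam k ε (F 1 p.1 p.2))
        = ∫ y, (∫ x, Qk k F x y * lam k ε (F 1 x y) ∂muI) ∂muI := by
      rw [show (volume.restrict UnitSq) = muI.prod muI from meas_sq,
        MeasureTheory.integral_prod _ hg]
      exact integral_integral_swap hg
    have hInner : Integrable (fun y => ∫ x, Qk k F x y * lam k ε (F 1 x y) ∂muI) muI := by
      have := hg.swap.integral_prod_left
      simpa [Function.comp] using this
    have hsec_eq : ∀ᵐ y ∂muI, ∀ᵐ x ∂muI,
        F 1 x y = min (fb 1 y) (k/2) + ∫ X in x..(1:ℝ), Qk k F X y :=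
      ae_sec_y (P := fun x y => F 1 x y = min (fb 1 y) (k/2) + ∫ X in x..(1:ℝ), Qk k F X y) he1
    have hsec_pos : ∀ᵐ y ∂muI, ∀ᵐ x ∂muI, ∀ i, 0 ≤ F i x y :=
      ae_sec_y (P := fun x y => ∀ i, 0 ≤ F i x y) hpos4
    have hy_mem : ∀ᵐ y ∂muI, y ∈ Icc (0:ℝ) 1 := ae_restrict_mem measurableSet_Icc
    have hkey : ∀ᵐ y ∂muI, -4 - fb 1 y * Real.log (1 + fb 1 y)
        ≤ ∫ x, Qk k F x y * lam k ε (F 1 x y) ∂muI := by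
      filter_upwards [hsec_eq, hsec_pos, hy_mem] with y heq hpos hy
      have hqys : Measurable (fun x => Qk k F x y) :=
        hQm.comp (measurable_id.prodMk measurable_const)
      have hqbd' : ∀ᵐ x ∂muI, ‖Qk k F x y‖ ≤ 2 * k ^ 2 := by
        filter_upwards [hpos] with x hx
        exact hQbd (x, y) hx
      have hqint : Integrable (fun x => Qk k F x y) muI :=
        Integrable.mono' (integrable_const (2 * k ^ 2)) hqys.aestronglyMeasurable hqbd'
      have hqiv : IntervalIntegrable (fun x => Qk k F x y) volume 0 1 :=
        (intervalIntegrable_iff_integrableOn_Icc_of_le zero_le_one).2 hqint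
      set c₁ : ℝ := min (fb 1 y) (k/2) + ∫ X in (0:ℝ)..1, Qk k F X y with hc₁_def
      have hx_mem : ∀ᵐ x ∂muI, x ∈ Icc (0:ℝ) 1 := ae_restrict_mem measurableSet_Icc
      have hae' : ∀ᵐ x ∂muI,
          F 1 x y = c₁ + ∫ t in (0:ℝ)..x, (fun X => -(Qk k F X y)) t := by
        filter_upwards [heq, hx_mem] with x hx hxm
        have h0x : IntervalIntegrable (fun X => Qk k F X y) volume 0 x := by
          apply hqiv.mono_set
          rw [uIcc_of_le zero_le_one, uIcc_of_le hxm.1]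
          exact Icc_subset_Icc le_rfl hxm.2
        have hsub := intervalIntegral.integral_interval_sub_left hqiv h0x
        rw [hx, intervalIntegral.integral_neg]
        rw [hc₁_def]
        linarith
      have hflux := flux_formula hk hε (fun X => -(Qk k F X y)) hqiv.neg
        (fun x => F 1 x y) c₁ hae'
      rw [intervalIntegral.integral_neg] at hflux
      have hend : c₁ + -(∫ X in (0:ℝ)..1, Qk k F X y) = min (fb 1 y) (k/2) := by
        rw [hc₁_def]; ring
      rw [hend] at hflux
      have hneg : ∫ x in Icc (0:ℝ) 1, (-(Qk k F x y)) * lam k ε (F 1 x y)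
          = -(∫ x in Icc (0:ℝ) 1, Qk k F x y * lam k ε (F 1 x y)) := by
        simp only [neg_mul]
        exact integral_neg _
      rw [hneg] at hflux
      have hfb1 : 0 ≤ fb 1 y := (hfb 1).2.1 y hy
      have hm0 : 0 ≤ min (fb 1 y) (k/2) := le_min hfb1 (by positivity)
      have h1 : psi k ε (min (fb 1 y) (k/2)) ≤ fb 1 y * Real.log (1 + fb 1 y) := by
        refine (psi_le hk0 hε hεk hm0).trans ?_
        have hmf : min (fb 1 y) (k/2) ≤ fb 1 y := min_le_left _ _
        exact mul_le_mul hmf (Real.log_le_log (by linarith) (by linarith))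
          (Real.log_nonneg (by linarith)) hfb1
      have h2 := psi_ge hk hε hεk c₁
      have hIccInt : (∫ x, Qk k F x y * lam k ε (F 1 x y) ∂muI)
          = ∫ x in Icc (0:ℝ) 1, Qk k F x y * lam k ε (F 1 x y) := rfl
      rw [hIccInt]
      linarith
    have hminor : Integrable (fun y => -4 - fb 1 y * Real.log (1 + fb 1 y)) muI :=
      (integrable_const (-4)).sub (hent 1)
    have hmono := integral_mono_ae hminor hInner hkey
    have hconstint : ∫ y, (-4 - fb 1 y * Real.log (1 + fb 1 y)) ∂muI
        = -4 - ∫ u in Icc (0:ℝ) 1, fb 1 u * Real.log (1 + fb 1 u) := by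
      rw [muI_def, integral_sub (integrable_const (-4)) (hent 1), integral_const,
        measureReal_restrict_apply_univ, Real.volume_real_Icc]
      norm_num
    rw [hiter]
    rw [hconstint] at hmono
    exact hmono
  -- block 2 : upper bound for T₂
  have hT2 : (∫ p in UnitSq, Qk k F p.1 p.2 * lam k ε (F 2 p.1 p.2))
      ≤ (∫ u in Icc (0:ℝ) 1, fb 2 u * Real.log (1 + fb 2 u)) + 4 := by
    have hg : Integrable (fun p : ℝ × ℝ => Qk k F p.1 p.2 * lam k ε (F 2 p.1 p.2))
        (muI.prod muI) := by rw [← meas_sq]; exact hint_piece 2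
    have hiter : (∫ p in UnitSq, Qk k F p.1 p.2 * lam k ε (F 2 p.1 p.2))
        = ∫ x, (∫ y, Qk k F x y * lam k ε (F 2 x y) ∂muI) ∂muI := by
      rw [show (volume.restrict UnitSq) = muI.prod muI from meas_sq]
      exact MeasureTheory.integral_prod _ hg
    have hInner : Integrable (fun x => ∫ y, Qk k F x y * lam k ε (F 2 x y) ∂muI) muI :=
      hg.integral_prod_left
    have hsec_eq : ∀ᵐ x ∂muI, ∀ᵐ y ∂muI,
        F 2 x y = min (fb 2 x) (k/2) - ∫ Y in (0:ℝ)..y, Qk k F x Y :=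
      ae_sec_x (P := fun x y => F 2 x y = min (fb 2 x) (k/2) - ∫ Y in (0:ℝ)..y, Qk k F x Y) he2
    have hsec_pos : ∀ᵐ x ∂muI, ∀ᵐ y ∂muI, ∀ i, 0 ≤ F i x y :=
      ae_sec_x (P := fun x y => ∀ i, 0 ≤ F i x y) hpos4
    have hx_mem : ∀ᵐ x ∂muI, x ∈ Icc (0:ℝ) 1 := ae_restrict_mem measurableSet_Icc
    have hkey : ∀ᵐ x ∂muI, (∫ y, Qk k F x y * lam k ε (F 2 x y) ∂muI)
        ≤ fb 2 x * Real.log (1 + fb 2 x) + 4 := by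
      filter_upwards [hsec_eq, hsec_pos, hx_mem] with x heq hpos hx
      have hqys : Measurable (fun Y => Qk k F x Y) :=
        hQm.comp (measurable_const.prodMk measurable_id)
      have hqbd' : ∀ᵐ Y ∂muI, ‖Qk k F x Y‖ ≤ 2 * k ^ 2 := by
        filter_upwards [hpos] with Y hY
        exact hQbd (x, Y) hY
      have hqint : Integrable (fun Y => Qk k F x Y) muI :=
        Integrable.mono' (integrable_const (2 * k ^ 2)) hqys.aestronglyMeasurable hqbd'
      have hqiv : IntervalIntegrable (fun Y => Qk k F x Y) volume 0 1 :=
        (intervalIntegrable_iff_integrableOn_Icc_of_le zero_le_one).2 hqint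
      have hae' : ∀ᵐ y ∂muI,
          F 2 x y = min (fb 2 x) (k/2) + ∫ t in (0:ℝ)..y, (fun Y => -(Qk k F x Y)) t := by
        filter_upwards [heq] with y hy
        rw [hy, intervalIntegral.integral_neg]
        ring
      have hflux := flux_formula hk hε (fun Y => -(Qk k F x Y)) hqiv.neg
        (fun y => F 2 x y) (min (fb 2 x) (k/2)) hae'
      have hneg : ∫ y in Icc (0:ℝ) 1, (-(Qk k F x y)) * lam k ε (F 2 x y)
          = -(∫ y in Icc (0:ℝ) 1, Qk k F x y * lam k ε (F 2 x y)) := by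
        simp only [neg_mul]
        exact integral_neg _
      rw [hneg] at hflux
      have hfb2 : 0 ≤ fb 2 x := (hfb 2).2.1 x hx
      have hm0 : 0 ≤ min (fb 2 x) (k/2) := le_min hfb2 (by positivity)
      have h1 : psi k ε (min (fb 2 x) (k/2)) ≤ fb 2 x * Real.log (1 + fb 2 x) := by
        refine (psi_le hk0 hε hεk hm0).trans ?_
        have hmf : min (fb 2 x) (k/2) ≤ fb 2 x := min_le_left _ _
        exact mul_le_mul hmf (Real.log_le_log (by linarith) (by linarith))
          (Real.log_nonneg (by linarith)) hfb2
      have h2 := psi_ge hk hε hεk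
        (min (fb 2 x) (k/2) + ∫ t in (0:ℝ)..1, -(Qk k F x t))
      have hIccInt : (∫ y, Qk k F x y * lam k ε (F 2 x y) ∂muI)
          = ∫ y in Icc (0:ℝ) 1, Qk k F x y * lam k ε (F 2 x y) := rfl
      rw [hIccInt]
      linarith
    have hmajor : Integrable (fun x => fb 2 x * Real.log (1 + fb 2 x) + 4) muI :=
      (hent 2).add (integrable_const 4)
    have hmono := integral_mono_ae hInner hmajor hkey
    have hconstint : ∫ x, (fb 2 x * Real.log (1 + fb 2 x) + 4) ∂muI
        = (∫ u in Icc (0:ℝ) 1, fb 2 u * Real.log (1 + fb 2 u)) + 4 := by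
      rw [muI_def, integral_add (hent 2) (integrable_const 4), integral_const,
        measureReal_restrict_apply_univ, Real.volume_real_Icc]
      norm_num
    rw [hiter]
    rw [hconstint] at hmono
    exact hmono
  -- block 3 : upper bound for T₃
  have hT3 : (∫ p in UnitSq, Qk k F p.1 p.2 * lam k ε (F 3 p.1 p.2))
      ≤ (∫ u in Icc (0:ℝ) 1, fb 3 u * Real.log (1 + fb 3 u)) + 4 := by
    have hg : Integrable (fun p : ℝ × ℝ => Qk k F p.1 p.2 * lam k ε (F 3 p.1 p.2))
        (muI.prod muI) := by rw [← meas_sq]; exact hint_piece 3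
    have hiter : (∫ p in UnitSq, Qk k F p.1 p.2 * lam k ε (F 3 p.1 p.2))
        = ∫ x, (∫ y, Qk k F x y * lam k ε (F 3 x y) ∂muI) ∂muI := by
      rw [show (volume.restrict UnitSq) = muI.prod muI from meas_sq]
      exact MeasureTheory.integral_prod _ hg
    have hInner : Integrable (fun x => ∫ y, Qk k F x y * lam k ε (F 3 x y) ∂muI) muI :=
      hg.integral_prod_left
    have hsec_eq : ∀ᵐ x ∂muI, ∀ᵐ y ∂muI,
        F 3 x y = min (fb 3 x) (k/2) - ∫ Y in y..(1:ℝ), Qk k F x Y :=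
      ae_sec_x (P := fun x y => F 3 x y = min (fb 3 x) (k/2) - ∫ Y in y..(1:ℝ), Qk k F x Y) he3
    have hsec_pos : ∀ᵐ x ∂muI, ∀ᵐ y ∂muI, ∀ i, 0 ≤ F i x y :=
      ae_sec_x (P := fun x y => ∀ i, 0 ≤ F i x y) hpos4
    have hx_mem : ∀ᵐ x ∂muI, x ∈ Icc (0:ℝ) 1 := ae_restrict_mem measurableSet_Icc
    have hkey : ∀ᵐ x ∂muI, (∫ y, Qk k F x y * lam k ε (F 3 x y) ∂muI)
        ≤ fb 3 x * Real.log (1 + fb 3 x) + 4 := by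
      filter_upwards [hsec_eq, hsec_pos, hx_mem] with x heq hpos hx
      have hqys : Measurable (fun Y => Qk k F x Y) :=
        hQm.comp (measurable_const.prodMk measurable_id)
      have hqbd' : ∀ᵐ Y ∂muI, ‖Qk k F x Y‖ ≤ 2 * k ^ 2 := by
        filter_upwards [hpos] with Y hY
        exact hQbd (x, Y) hY
      have hqint : Integrable (fun Y => Qk k F x Y) muI :=
        Integrable.mono' (integrable_const (2 * k ^ 2)) hqys.aestronglyMeasurable hqbd'
      have hqiv : IntervalIntegrable (fun Y => Qk k F x Y) volume 0 1 :=
        (intervalIntegrable_iff_integrableOn_Icc_of_le zero_le_one).2 hqint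
      set c₃ : ℝ := min (fb 3 x) (k/2) - ∫ Y in (0:ℝ)..1, Qk k F x Y with hc₃_def
      have hy_mem : ∀ᵐ y ∂muI, y ∈ Icc (0:ℝ) 1 := ae_restrict_mem measurableSet_Icc
      have hae' : ∀ᵐ y ∂muI,
          F 3 x y = c₃ + ∫ t in (0:ℝ)..y, Qk k F x t := by
        filter_upwards [heq, hy_mem] with y hy hym
        have h0y : IntervalIntegrable (fun Y => Qk k F x Y) volume 0 y := by
          apply hqiv.mono_set
          rw [uIcc_of_le zero_le_one, uIcc_of_le hym.1]
          exact Icc_subset_Icc le_rfl hym.2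
        have hsub := intervalIntegral.integral_interval_sub_left hqiv h0y
        rw [hy, hc₃_def]
        linarith
      have hflux := flux_formula hk hε (fun Y => Qk k F x Y) hqiv
        (fun y => F 3 x y) c₃ hae'
      have hend : c₃ + ∫ Y in (0:ℝ)..1, Qk k F x Y = min (fb 3 x) (k/2) := by
        rw [hc₃_def]; ring
      rw [hend] at hflux
      have hfb3 : 0 ≤ fb 3 x := (hfb 3).2.1 x hx
      have hm0 : 0 ≤ min (fb 3 x) (k/2) := le_min hfb3 (by positivity)
      have h1 : psi k ε (min (fb 3 x) (k/2)) ≤ fb 3 x * Real.log (1 + fb 3 x) := by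
        refine (psi_le hk0 hε hεk hm0).trans ?_
        have hmf : min (fb 3 x) (k/2) ≤ fb 3 x := min_le_left _ _
        exact mul_le_mul hmf (Real.log_le_log (by linarith) (by linarith))
          (Real.log_nonneg (by linarith)) hfb3
      have h2 := psi_ge hk hε hεk c₃
      have hIccInt : (∫ y, Qk k F x y * lam k ε (F 3 x y) ∂muI)
          = ∫ y in Icc (0:ℝ) 1, Qk k F x y * lam k ε (F 3 x y) := rfl
      rw [hIccInt, hflux]
      linarith
    have hmajor : Integrable (fun x => fb 3 x * Real.log (1 + fb 3 x) + 4) muI :=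
      (hent 3).add (integrable_const 4)
    have hmono := integral_mono_ae hInner hmajor hkey
    have hconstint : ∫ x, (fb 3 x * Real.log (1 + fb 3 x) + 4) ∂muI
        = (∫ u in Icc (0:ℝ) 1, fb 3 u * Real.log (1 + fb 3 u)) + 4 := by
      rw [muI_def, integral_add (hent 3) (integrable_const 4), integral_const,
        measureReal_restrict_apply_univ, Real.volume_real_Icc]
      norm_num
    rw [hiter]
    rw [hconstint] at hmono
    exact hmono
  -- combine
  have hsplit : (∫ p in UnitSq, Qk k F p.1 p.2 *
        (lam k ε (F 2 p.1 p.2) + lam k ε (F 3 p.1 p.2)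
          - lam k ε (F 0 p.1 p.2) - lam k ε (F 1 p.1 p.2)))
      = (∫ p in UnitSq, Qk k F p.1 p.2 * lam k ε (F 2 p.1 p.2))
        + (∫ p in UnitSq, Qk k F p.1 p.2 * lam k ε (F 3 p.1 p.2))
        - (∫ p in UnitSq, Qk k F p.1 p.2 * lam k ε (F 0 p.1 p.2))
        - (∫ p in UnitSq, Qk k F p.1 p.2 * lam k ε (F 1 p.1 p.2)) := by
    rw [show (fun p : ℝ × ℝ => Qk k F p.1 p.2 *
        (lam k ε (F 2 p.1 p.2) + lam k ε (F 3 p.1 p.2)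
          - lam k ε (F 0 p.1 p.2) - lam k ε (F 1 p.1 p.2)))
      = (fun p : ℝ × ℝ => Qk k F p.1 p.2 * lam k ε (F 2 p.1 p.2)
          + Qk k F p.1 p.2 * lam k ε (F 3 p.1 p.2)
          - Qk k F p.1 p.2 * lam k ε (F 0 p.1 p.2)
          - Qk k F p.1 p.2 * lam k ε (F 1 p.1 p.2)) from funext (fun p => by ring)]
    have hiA : Integrable (fun p : ℝ × ℝ => Qk k F p.1 p.2 * lam k ε (F 2 p.1 p.2)
        + Qk k F p.1 p.2 * lam k ε (F 3 p.1 p.2)) (volume.restrict UnitSq) :=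
      (hint_piece 2).add (hint_piece 3)
    have hiB : Integrable (fun p : ℝ × ℝ => Qk k F p.1 p.2 * lam k ε (F 2 p.1 p.2)
        + Qk k F p.1 p.2 * lam k ε (F 3 p.1 p.2)
        - Qk k F p.1 p.2 * lam k ε (F 0 p.1 p.2)) (volume.restrict UnitSq) :=
      hiA.sub (hint_piece 0)
    rw [integral_sub hiB (hint_piece 1), integral_sub hiA (hint_piece 0),
      integral_add (hint_piece 2) (hint_piece 3)]
  rw [hsplit, Fin.sum_univ_four]
  linarith

/-- The regularization sequence `ε_n = 1/((n+1)k)`. -/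
def eps (k : ℝ) (n : ℕ) : ℝ := 1 / (((n:ℝ) + 1) * k)

lemma eps_pos {k : ℝ} (hk : 0 < k) (n : ℕ) : 0 < eps k n := by
  rw [eps]; positivity

lemma eps_le {k : ℝ} (hk : 0 < k) (n : ℕ) : eps k n ≤ 1 / k := by
  rw [eps]
  apply div_le_div_of_nonneg_left one_pos.le hk
  nlinarith [Nat.cast_nonneg (α := ℝ) n]

lemma eps_tendsto {k : ℝ} (hk : 0 < k) : Tendsto (eps k) atTop (𝓝 0) := by
  have h1 : Tendsto (fun n : ℕ => ((n:ℝ) + 1) * k) atTop atTop :=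
    (tendsto_natCast_atTop_atTop.atTop_add tendsto_const_nhds).atTop_mul_const hk
  have h2 := h1.inv_tendsto_atTop
  have h3 : (fun n : ℕ => ((n:ℝ) + 1) * k)⁻¹ = eps k := by
    funext n
    simp [eps, one_div]
  rwa [h3] at h2

/-- one-sided minorant estimate -/
lemma half_minorant {a b A B : ℝ} (ha : 0 ≤ a) (hab : a ≤ b)
    (hA0 : 0 < A) (hB : b ≤ B) (hA : A ≤ a + 3) :
    -3 ≤ (b - a) * (Real.log B - Real.log A) := by
  rcases eq_or_lt_of_le (ha.trans hab) with hb0 | hb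
  · rw [← hb0] at hab
    have : a = 0 := le_antisymm hab ha
    rw [this, ← hb0]
    norm_num
  · have hlogB : Real.log b ≤ Real.log B := Real.log_le_log hb hB
    have hlogA : Real.log A ≤ Real.log (a + 3) := Real.log_le_log hA0 hA
    have hd : -((a + 3 - b) / b) ≤ Real.log B - Real.log A := by
      have l1 : Real.log ((a + 3) / b) ≤ (a + 3) / b - 1 :=
        Real.log_le_sub_one_of_pos (by positivity)
      rw [Real.log_div (by positivity) hb.ne'] at l1
      have l2 : (a + 3) / b - 1 = (a + 3 - b) / b := by field_simp
      rw [l2] at l1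
      linarith
    have hba : 0 ≤ b - a := by linarith
    have hmul := mul_le_mul_of_nonneg_left hd hba
    have hfin : (b - a) * ((a + 3 - b) / b) ≤ 3 := by
      rw [mul_div_assoc', div_le_iff₀ hb]
      nlinarith
    nlinarith
  
/-- pointwise lower bound for the regularized integrand -/
lemma minorant {k ε t0 t1 t2 t3 : ℝ} (hk : 2 < k) (hε : 0 < ε) (hε1 : ε ≤ 1/k)
    (h0 : t0 ∈ Icc 0 k) (h1 : t1 ∈ Icc 0 k) (h2 : t2 ∈ Icc 0 k) (h3 : t3 ∈ Icc 0 k) :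
    -3 ≤ (t2 * t3 - t0 * t1) *
      ((Real.log (ε + t2) + Real.log (ε + t3)) - (Real.log (ε + t0) + Real.log (ε + t1))) := by
  have hk0 : (0:ℝ) < k := by linarith
  have hε2 : ε ≤ 1/2 := by
    refine hε1.trans ?_
    rw [div_le_div_iff₀ hk0 (by norm_num)]
    linarith
  have hεt : ∀ t : ℝ, t ∈ Icc 0 k → ε * t ≤ 1 := by
    intro t ht
    have : ε * t ≤ (1/k) * k := mul_le_mul hε1 ht.2 ht.1 (by positivity)
    rwa [one_div, inv_mul_cancel₀ hk0.ne'] at this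
  have e0 : 0 < ε + t0 := by linarith [h0.1]
  have e1 : 0 < ε + t1 := by linarith [h1.1]
  have e2 : 0 < ε + t2 := by linarith [h2.1]
  have e3 : 0 < ε + t3 := by linarith [h3.1]
  have hlogA : Real.log (ε + t0) + Real.log (ε + t1) = Real.log ((ε + t0) * (ε + t1)) :=
    (Real.log_mul e0.ne' e1.ne').symm
  have hlogB : Real.log (ε + t2) + Real.log (ε + t3) = Real.log ((ε + t2) * (ε + t3)) :=
    (Real.log_mul e2.ne' e3.ne').symm
  rw [hlogA, hlogB]
  set a : ℝ := t0 * t1 with ha_def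
  set b : ℝ := t2 * t3 with hb_def
  set A : ℝ := (ε + t0) * (ε + t1) with hA_def
  set B : ℝ := (ε + t2) * (ε + t3) with hB_def
  have ha0 : 0 ≤ a := mul_nonneg h0.1 h1.1
  have hb0 : 0 ≤ b := mul_nonneg h2.1 h3.1
  have hA0 : 0 < A := mul_pos e0 e1
  have hB0 : 0 < B := mul_pos e2 e3
  have haA : a ≤ A := by
    rw [ha_def, hA_def]
    nlinarith [h0.1, h1.1]
  have hbB : b ≤ B := by
    rw [hb_def, hB_def]
    nlinarith [h2.1, h3.1]
  have hA3 : A ≤ a + 3 := by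
    have i0 := hεt t0 h0
    have i1 := hεt t1 h1
    rw [hA_def, ha_def]
    nlinarith [h0.1, h1.1]
  have hB3 : B ≤ b + 3 := by
    have i2 := hεt t2 h2
    have i3 := hεt t3 h3
    rw [hB_def, hb_def]
    nlinarith [h2.1, h3.1]
  rcases le_total a b with hab | hba
  · exact half_minorant ha0 hab hA0 hbB hA3
  · have := half_minorant hb0 hba hB0 haA hB3
    nlinarith [this]

lemma tendsto_top {k t0 t1 t2 t3 : ℝ} (hk : 2 < k)
    (h0 : t0 ∈ Icc 0 k) (h1 : t1 ∈ Icc 0 k) (h2 : t2 ∈ Icc 0 k) (h3 : t3 ∈ Icc 0 k)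
    (ha : t0 * t1 = 0) (hb : 0 < t2 * t3) :
    Tendsto (fun n : ℕ => (t2 * t3 - t0 * t1) *
      ((Real.log (eps k n + t2) + Real.log (eps k n + t3))
        - (Real.log (eps k n + t0) + Real.log (eps k n + t1))) + 3) atTop atTop := by
  have hk0 : (0:ℝ) < k := by linarith
  have ht2 : 0 < t2 := by
    rcases h2.1.lt_or_eq with h | h
    · exact h
    · exfalso; rw [← h, zero_mul] at hb; exact lt_irrefl 0 hb
  have ht3 : 0 < t3 := by
    rcases h3.1.lt_or_eq with h | h
    · exact h
    · exfalso; rw [← h, mul_zero] at hb; exact lt_irrefl 0 hb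
  have hεb : ∀ n, 0 < eps k n := eps_pos hk0
  have hεle : ∀ n, eps k n ≤ 1 := fun n => (eps_le hk0 n).trans (by
    rw [div_le_one hk0]; linarith)
  set b : ℝ := t2 * t3 with hb_def
  have hle : ∀ n : ℕ, b * (-Real.log (eps k n))
        + (b * (Real.log b - Real.log (1 + k)) + 3)
      ≤ (t2 * t3 - t0 * t1) *
        ((Real.log (eps k n + t2) + Real.log (eps k n + t3))
          - (Real.log (eps k n + t0) + Real.log (eps k n + t1))) + 3 := by
    intro n
    have hP : Real.log b ≤ Real.log (eps k n + t2) + Real.log (eps k n + t3) := by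
      rw [hb_def, Real.log_mul ht2.ne' ht3.ne']
      have p2 : Real.log t2 ≤ Real.log (eps k n + t2) :=
        Real.log_le_log ht2 (by linarith [hεb n])
      have p3 : Real.log t3 ≤ Real.log (eps k n + t3) :=
        Real.log_le_log ht3 (by linarith [hεb n])
      linarith
    have hQ : Real.log (eps k n + t0) + Real.log (eps k n + t1)
        ≤ Real.log (eps k n) + Real.log (1 + k) := by
      rcases mul_eq_zero.1 ha with h | h
      · rw [h, add_zero]
        have q1 : Real.log (eps k n + t1) ≤ Real.log (1 + k) :=
          Real.log_le_log (by linarith [hεb n, h1.1]) (by linarith [hεle n, h1.2])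
        linarith
      · rw [h, add_zero]
        have q0 : Real.log (eps k n + t0) ≤ Real.log (1 + k) :=
          Real.log_le_log (by linarith [hεb n, h0.1]) (by linarith [hεle n, h0.2])
        linarith
    have hmul : b * ((Real.log b - Real.log (1 + k)) - Real.log (eps k n))
        ≤ b * ((Real.log (eps k n + t2) + Real.log (eps k n + t3))
          - (Real.log (eps k n + t0) + Real.log (eps k n + t1))) := by
      apply mul_le_mul_of_nonneg_left _ hb.le
      linarith
    rw [ha, sub_zero, ← hb_def]
    have expand : b * (Real.log b - Real.log (1 + k) - Real.log (eps k n))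
        = b * (-Real.log (eps k n)) + b * (Real.log b - Real.log (1 + k)) := by ring
    linarith [hmul, expand]
  have hlogtend : Tendsto (fun n : ℕ => Real.log (eps k n)) atTop atBot := by
    apply Real.tendsto_log_nhdsGT_zero.comp
    apply tendsto_nhdsWithin_of_tendsto_nhds_of_eventually_within _ (eps_tendsto hk0)
    exact Eventually.of_forall (fun n => hεb n)
  have hnegtend : Tendsto (fun n : ℕ => -Real.log (eps k n)) atTop atTop :=
    tendsto_neg_atBot_atTop.comp hlogtend
  have hstend : Tendsto (fun n : ℕ => b * (-Real.log (eps k n))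
      + (b * (Real.log b - Real.log (1 + k)) + 3)) atTop atTop :=
    (hnegtend.const_mul_atTop hb).atTop_add tendsto_const_nhds
  exact tendsto_atTop_mono hle hstend

lemma point_liminf {k t0 t1 t2 t3 : ℝ} (hk : 2 < k)
    (h0 : t0 ∈ Icc 0 k) (h1 : t1 ∈ Icc 0 k) (h2 : t2 ∈ Icc 0 k) (h3 : t3 ∈ Icc 0 k) :
    entDiss (t0 * t1) (t2 * t3) ≤ Filter.liminf (fun n : ℕ => ENNReal.ofReal
      ((t2 * t3 - t0 * t1) * ((Real.log (eps k n + t2) + Real.log (eps k n + t3))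
        - (Real.log (eps k n + t0) + Real.log (eps k n + t1))) + 3)) atTop := by
  have hk0 : (0:ℝ) < k := by linarith
  have ha0 : 0 ≤ t0 * t1 := mul_nonneg h0.1 h1.1
  have hb0 : 0 ≤ t2 * t3 := mul_nonneg h2.1 h3.1
  by_cases hA : t0 * t1 = 0 <;> by_cases hB : t2 * t3 = 0
  · rw [entDiss, if_pos ⟨hA, hB⟩]
    exact zero_le
  · -- a = 0, b > 0 : integrand tends to ∞
    rw [entDiss, if_neg (by tauto), if_pos (Or.inl hA)]
    have htop := tendsto_top hk h0 h1 h2 h3 hA (hb0.lt_of_ne (Ne.symm hB))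
    have hcomp : Tendsto (fun n : ℕ => ENNReal.ofReal
        ((t2 * t3 - t0 * t1) * ((Real.log (eps k n + t2) + Real.log (eps k n + t3))
          - (Real.log (eps k n + t0) + Real.log (eps k n + t1))) + 3)) atTop (𝓝 ⊤) :=
      ENNReal.tendsto_ofReal_atTop.comp htop
    exact le_of_eq hcomp.liminf_eq.symm
  · -- b = 0, a > 0
    rw [entDiss, if_neg (by tauto), if_pos (Or.inr hB)]
    have htop' := tendsto_top hk h2 h3 h0 h1 hB (ha0.lt_of_ne (Ne.symm hA))
    have htop : Tendsto (fun n : ℕ => (t2 * t3 - t0 * t1) *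
        ((Real.log (eps k n + t2) + Real.log (eps k n + t3))
          - (Real.log (eps k n + t0) + Real.log (eps k n + t1))) + 3) atTop atTop := by
      apply htop'.congr
      intro n
      ring
    have hcomp : Tendsto (fun n : ℕ => ENNReal.ofReal
        ((t2 * t3 - t0 * t1) * ((Real.log (eps k n + t2) + Real.log (eps k n + t3))
          - (Real.log (eps k n + t0) + Real.log (eps k n + t1))) + 3)) atTop (𝓝 ⊤) :=
      ENNReal.tendsto_ofReal_atTop.comp htop
    exact le_of_eq hcomp.liminf_eq.symm
  · -- both positive
    have haP : 0 < t0 * t1 := ha0.lt_of_ne (Ne.symm hA)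
    have hbP : 0 < t2 * t3 := hb0.lt_of_ne (Ne.symm hB)
    have ht0 : 0 < t0 := lt_of_le_of_ne h0.1 (fun h => hA (by rw [← h, zero_mul]))
    have ht1 : 0 < t1 := lt_of_le_of_ne h1.1 (fun h => hA (by rw [← h, mul_zero]))
    have ht2 : 0 < t2 := lt_of_le_of_ne h2.1 (fun h => hB (by rw [← h, zero_mul]))
    have ht3 : 0 < t3 := lt_of_le_of_ne h3.1 (fun h => hB (by rw [← h, mul_zero]))
    have hlog : ∀ t : ℝ, 0 < t →
        Tendsto (fun n : ℕ => Real.log (eps k n + t)) atTop (𝓝 (Real.log t)) := by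
      intro t ht
      have h1' : Tendsto (fun n : ℕ => eps k n + t) atTop (𝓝 (0 + t)) :=
        (eps_tendsto hk0).add tendsto_const_nhds
      rw [zero_add] at h1'
      exact ((Real.continuousAt_log ht.ne').tendsto).comp h1'
    set L : ℝ := (t2 * t3 - t0 * t1) *
      ((Real.log t2 + Real.log t3) - (Real.log t0 + Real.log t1)) + 3 with hL_def
    have htends : Tendsto (fun n : ℕ => (t2 * t3 - t0 * t1) *
        ((Real.log (eps k n + t2) + Real.log (eps k n + t3))
          - (Real.log (eps k n + t0) + Real.log (eps k n + t1))) + 3) atTop (𝓝 L) := by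
      rw [hL_def]
      exact ((((hlog t2 ht2).add (hlog t3 ht3)).sub
        ((hlog t0 ht0).add (hlog t1 ht1))).const_mul _).add_const 3
    have hcomp : Tendsto (fun n : ℕ => ENNReal.ofReal
        ((t2 * t3 - t0 * t1) * ((Real.log (eps k n + t2) + Real.log (eps k n + t3))
          - (Real.log (eps k n + t0) + Real.log (eps k n + t1))) + 3)) atTop
        (𝓝 (ENNReal.ofReal L)) :=
      (ENNReal.continuous_ofReal.tendsto L).comp htends
    rw [hcomp.liminf_eq, entDiss, if_neg (by tauto), if_neg (by tauto)]
    apply ENNReal.ofReal_le_ofReal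
    have hcalc : (t0 * t1 - t2 * t3) * Real.log ((t0 * t1) / (t2 * t3)) = L - 3 := by
      rw [hL_def, Real.log_div haP.ne' hbP.ne', Real.log_mul ht0.ne' ht1.ne',
        Real.log_mul ht2.ne' ht3.ne']
      ring
    linarith [hcalc.le, hcalc.ge]

end EPB4

end Assembly

/-- Lemma 3.1, entropy production bound: the entropy production term
`D^k` of the truncated system is bounded uniformly in `k > 2`.  The integrand is of the
form `(a - b) log (a/b)` with `a = F₁ᵏF₂ᵏ/((1+F₁ᵏ/k)(1+F₂ᵏ/k))` and
`b = F₃ᵏF₄ᵏ/((1+F₃ᵏ/k)(1+F₄ᵏ/k))`, hence nonnegative, and is formalized through the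
extended-real valued `entDiss`. -/
theorem truncated_entropy_production_bound (fb : Fin 4 → ℝ → ℝ)
    (hfb : IsBoundaryData fb) (hent : FiniteEntropy fb) :
    ∃ c : ℝ, ∀ k : ℕ, 2 < k → ∀ F : Fin 4 → ℝ → ℝ → ℝ, MildTrunc (k : ℝ) fb F →
      (∫⁻ p in UnitSq,
          entDiss (truncK (k : ℝ) (F 0 p.1 p.2) * truncK (k : ℝ) (F 1 p.1 p.2))
            (truncK (k : ℝ) (F 2 p.1 p.2) * truncK (k : ℝ) (F 3 p.1 p.2)))
        ≤ ENNReal.ofReal c := by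
  classical
  refine ⟨(∑ i, ∫ u in Icc (0:ℝ) 1, fb i u * Real.log (1 + fb i u)) + 19, ?_⟩
  intro k hk2 F hM
  set K : ℝ := (k : ℝ) with hK_def
  have hk : 2 < K := by rw [hK_def]; exact_mod_cast hk2
  have hk0 : (0:ℝ) < K := by linarith
  have hFm : ∀ i, Measurable (fun p : ℝ × ℝ => F i p.1 p.2) := fun i => hM.1 i
  have hQm : Measurable (fun p : ℝ × ℝ => Qk K F p.1 p.2) := by
    simp only [Qk]
    exact (((EPB.measurable_truncK K).comp (hFm 2)).mul
        ((EPB.measurable_truncK K).comp (hFm 3))).sub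
      (((EPB.measurable_truncK K).comp (hFm 0)).mul ((EPB.measurable_truncK K).comp (hFm 1)))
  have hpos4 : ∀ᵐ p : ℝ × ℝ ∂(volume.restrict UnitSq), ∀ i, 0 ≤ F i p.1 p.2 := by
    filter_upwards [hM.2.1 0, hM.2.1 1, hM.2.1 2, hM.2.1 3] with p h0 h1 h2 h3 i
    fin_cases i <;> assumption
  have hQbd : ∀ p : ℝ × ℝ, (∀ i, 0 ≤ F i p.1 p.2) → |Qk K F p.1 p.2| ≤ 2 * K ^ 2 := by
    intro p hp
    have t0 := EPB.truncK_nonneg hk0 (hp 0)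
    have t1 := EPB.truncK_nonneg hk0 (hp 1)
    have t2 := EPB.truncK_nonneg hk0 (hp 2)
    have t3 := EPB.truncK_nonneg hk0 (hp 3)
    have u0 := EPB.truncK_le_k hk0 (hp 0)
    have u1 := EPB.truncK_le_k hk0 (hp 1)
    have u2 := EPB.truncK_le_k hk0 (hp 2)
    have u3 := EPB.truncK_le_k hk0 (hp 3)
    rw [Qk, abs_le]
    constructor <;> nlinarith
  -- the regularized integrand
  set g : ℕ → ℝ × ℝ → ℝ := fun n p => Qk K F p.1 p.2 *
    (EPB2.lam K (EPB4.eps K n) (F 2 p.1 p.2) + EPB2.lam K (EPB4.eps K n) (F 3 p.1 p.2)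
      - EPB2.lam K (EPB4.eps K n) (F 0 p.1 p.2)
      - EPB2.lam K (EPB4.eps K n) (F 1 p.1 p.2)) with hg_def
  -- bridge to the log form
  have hbridge : ∀ᵐ p : ℝ × ℝ ∂(volume.restrict UnitSq), ∀ n : ℕ,
      g n p = (truncK K (F 2 p.1 p.2) * truncK K (F 3 p.1 p.2)
          - truncK K (F 0 p.1 p.2) * truncK K (F 1 p.1 p.2)) *
        ((Real.log (EPB4.eps K n + truncK K (F 2 p.1 p.2))
            + Real.log (EPB4.eps K n + truncK K (F 3 p.1 p.2)))
          - (Real.log (EPB4.eps K n + truncK K (F 0 p.1 p.2))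
            + Real.log (EPB4.eps K n + truncK K (F 1 p.1 p.2)))) := by
    filter_upwards [hpos4] with p hp n
    have hl : ∀ i, EPB2.lam K (EPB4.eps K n) (F i p.1 p.2)
        = Real.log (EPB4.eps K n + truncK K (F i p.1 p.2)) := by
      intro i
      rw [EPB2.lam, max_eq_left (hp i)]
    rw [hg_def]
    simp only [hl, Qk]
    ring
  have htmem : ∀ p : ℝ × ℝ, (∀ i, 0 ≤ F i p.1 p.2) →
      ∀ i, truncK K (F i p.1 p.2) ∈ Icc (0:ℝ) K := fun p hp i =>
    ⟨EPB.truncK_nonneg hk0 (hp i), EPB.truncK_le_k hk0 (hp i)⟩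
  -- a.e. pointwise liminf bound
  have hptwise : ∀ᵐ p : ℝ × ℝ ∂(volume.restrict UnitSq),
      entDiss (truncK K (F 0 p.1 p.2) * truncK K (F 1 p.1 p.2))
        (truncK K (F 2 p.1 p.2) * truncK K (F 3 p.1 p.2))
      ≤ liminf (fun n : ℕ => ENNReal.ofReal (g n p + 3)) atTop := by
    filter_upwards [hpos4, hbridge] with p hp hb
    have hfun : (fun n : ℕ => ENNReal.ofReal (g n p + 3))
        = fun n : ℕ => ENNReal.ofReal
          ((truncK K (F 2 p.1 p.2) * truncK K (F 3 p.1 p.2)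
            - truncK K (F 0 p.1 p.2) * truncK K (F 1 p.1 p.2)) *
          ((Real.log (EPB4.eps K n + truncK K (F 2 p.1 p.2))
              + Real.log (EPB4.eps K n + truncK K (F 3 p.1 p.2)))
            - (Real.log (EPB4.eps K n + truncK K (F 0 p.1 p.2))
              + Real.log (EPB4.eps K n + truncK K (F 1 p.1 p.2)))) + 3) := by
      funext n
      rw [hb n]
    rw [hfun]
    exact EPB4.point_liminf hk (htmem p hp 0) (htmem p hp 1) (htmem p hp 2) (htmem p hp 3)
  -- measurability
  have hgm : ∀ n, Measurable (g n) := by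
    intro n
    rw [hg_def]
    have hlm : ∀ i, Measurable (fun p : ℝ × ℝ => EPB2.lam K (EPB4.eps K n) (F i p.1 p.2)) :=
      fun i => (EPB2.lam_cont hk0 (EPB4.eps_pos hk0 n)).measurable.comp (hFm i)
    exact hQm.mul ((((hlm 2).add (hlm 3)).sub (hlm 0)).sub (hlm 1))
  -- integrability of g n
  have hgint : ∀ n, Integrable (g n) (volume.restrict UnitSq) := by
    intro n
    have hεn := EPB4.eps_pos hk0 n
    set Mb : ℝ := |Real.log (EPB4.eps K n)| + |Real.log (EPB4.eps K n + K)| with hMb_def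
    have hMb0 : 0 ≤ Mb := by positivity
    apply Integrable.mono' (integrable_const (2 * K ^ 2 * (4 * Mb)))
    · exact (hgm n).aestronglyMeasurable
    · filter_upwards [hpos4] with p hp
      rw [hg_def]
      have hl := fun s => EPB2.abs_lam_le hk0 hεn s
      rw [norm_eq_abs, abs_mul]
      have h4 : |EPB2.lam K (EPB4.eps K n) (F 2 p.1 p.2) + EPB2.lam K (EPB4.eps K n) (F 3 p.1 p.2)
          - EPB2.lam K (EPB4.eps K n) (F 0 p.1 p.2) - EPB2.lam K (EPB4.eps K n) (F 1 p.1 p.2)|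
          ≤ 4 * Mb := by
        have a0 := abs_le.1 (hl (F 0 p.1 p.2))
        have a1 := abs_le.1 (hl (F 1 p.1 p.2))
        have a2 := abs_le.1 (hl (F 2 p.1 p.2))
        have a3 := abs_le.1 (hl (F 3 p.1 p.2))
        rw [abs_le]
        constructor <;> [linarith [a0.1, a1.1, a2.2, a3.2, a0.2, a1.2, a2.1, a3.1];
          linarith [a0.1, a1.1, a2.2, a3.2]]
      exact mul_le_mul (hQbd p hp) h4 (abs_nonneg _) (by positivity)
  -- nonnegativity of g n + 3
  have hgnn : ∀ n, 0 ≤ᵐ[volume.restrict UnitSq] fun p => g n p + 3 := by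
    intro n
    filter_upwards [hpos4, hbridge] with p hp hb
    have hmin := EPB4.minorant hk (EPB4.eps_pos hk0 n) (EPB4.eps_le hk0 n)
      (htmem p hp 0) (htmem p hp 1) (htmem p hp 2) (htmem p hp 3)
    have := hb n
    simp only [Pi.zero_apply]
    linarith [this ▸ hmin]
  -- the uniform bound from Deps_bound
  have hDn : ∀ n, ∫ p in UnitSq, g n p
      ≤ (∑ i, ∫ u in Icc (0:ℝ) 1, fb i u * Real.log (1 + fb i u)) + 16 := by
    intro n
    have := EPB4.Deps_bound fb hfb hent K hk F hM (EPB4.eps K n)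
      (EPB4.eps_pos hk0 n) (EPB4.eps_le hk0 n)
    exact this
  -- lintegral estimates
  have hlint : ∀ n, (∫⁻ p in UnitSq, ENNReal.ofReal (g n p + 3))
      ≤ ENNReal.ofReal ((∑ i, ∫ u in Icc (0:ℝ) 1, fb i u * Real.log (1 + fb i u)) + 19) := by
    intro n
    have hgi3 : Integrable (fun p : ℝ × ℝ => g n p + 3) (volume.restrict UnitSq) :=
      (hgint n).add (integrable_const 3)
    rw [← ofReal_integral_eq_lintegral_ofReal hgi3 (hgnn n)]
    apply ENNReal.ofReal_le_ofReal
    rw [integral_add (hgint n) (integrable_const 3), integral_const]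
    have hvol : (volume.restrict UnitSq).real univ = 1 := by
      rw [measureReal_def, EPB4.vol_sq]; simp
    rw [hvol]
    have := hDn n
    simp only [one_smul]
    linarith
  calc (∫⁻ p in UnitSq,
      entDiss (truncK K (F 0 p.1 p.2) * truncK K (F 1 p.1 p.2))
        (truncK K (F 2 p.1 p.2) * truncK K (F 3 p.1 p.2)))
      ≤ ∫⁻ p in UnitSq, liminf (fun n : ℕ => ENNReal.ofReal (g n p + 3)) atTop :=
        lintegral_mono_ae hptwise
    _ ≤ liminf (fun n : ℕ => ∫⁻ p in UnitSq, ENNReal.ofReal (g n p + 3)) atTop :=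
        lintegral_liminf_le' (fun n =>
          (((hgm n).add_const 3).ennreal_ofReal).aemeasurable)
    _ ≤ ENNReal.ofReal ((∑ i, ∫ u in Icc (0:ℝ) 1, fb i u * Real.log (1 + fb i u)) + 19) := by
        refine le_trans (liminf_le_liminf (Eventually.of_forall hlint)) ?_
        rw [liminf_const]
end
end
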